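/- arXiv:2404.10955 — 9 statements merged into one kernel-verified Lean document; each statement's English description precedes it below -/
import Mathlib

section
/- Let G be a complete graph with a metric weight function w. If 𝒫 is a k-path packing of G (a partition of the vertices into vertex-disjoint simple paths on k vertices each) and 𝒞 is obtained from 𝒫 by adding, for each path, the edge joining its two endpoints, then 𝒞 is a k-cycle packing with w(𝒞) ≤ 2·w(𝒫). In particular, the minimum weight of a k-cycle packing is at most twice the minimum weight of a k-path packing. -/
theorem path_bound {V : Type*} (w : V → V → ℝ)
    (htri : ∀ a b c, w a c ≤ w a b + w b c) (q : ℕ → V) :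
    ∀ n, 1 ≤ n → w (q 0) (q n) ≤ ∑ i ∈ Finset.range n, w (q i) (q (i + 1)) := by
  intro n hn
  induction n, hn using Nat.le_induction with
  | base => simp
  | succ n hn ih =>
    rw [Finset.sum_range_succ]
    calc w (q 0) (q (n + 1)) ≤ w (q 0) (q n) + w (q n) (q (n + 1)) := htri _ _ _
    _ ≤ _ := by linarith

/-- completing each path of a k-path packing to a k-cycle (by adding the
edge joining the endpoints of each path) yields a k-cycle packing of at most twice
the weight; in particular, the minimum weight of a k-cycle packing is at most twice
the minimum weight of a k-path packing. -/
theorem stmt_1 {V : Type*} [Fintype V] (w : V → V → ℝ)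
    (hsymm : ∀ a b, w a b = w b a)
    (hnonneg : ∀ a b, 0 ≤ w a b)
    (htri : ∀ a b c, w a c ≤ w a b + w b c)
    (k m : ℕ) (hk : 2 ≤ k)
    -- a k-path packing: m vertex-disjoint simple paths on k vertices covering V
    (p : Fin m → ℕ → V)
    (hinj : ∀ a, ∀ i j, i < k → j < k → p a i = p a j → i = j)
    (hdisj : ∀ a b : Fin m, a ≠ b → ∀ i j, i < k → j < k → p a i ≠ p b j)
    (hcover : ∀ v : V, ∃ a : Fin m, ∃ i < k, p a i = v) :
    -- the completed k-cycle packing has weight at most twice the path packing's weight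
    (∑ a : Fin m, ((∑ i ∈ Finset.range (k - 1), w (p a i) (p a (i + 1)))
        + w (p a (k - 1)) (p a 0)))
      ≤ 2 * ∑ a : Fin m, ∑ i ∈ Finset.range (k - 1), w (p a i) (p a (i + 1)) := by
  have h : ∀ a : Fin m, w (p a (k - 1)) (p a 0)
      ≤ ∑ i ∈ Finset.range (k - 1), w (p a i) (p a (i + 1)) := by
    intro a
    rw [hsymm]
    exact path_bound w htri (p a) (k - 1) (by omega)
  calc (∑ a : Fin m, ((∑ i ∈ Finset.range (k - 1), w (p a i) (p a (i + 1)))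
        + w (p a (k - 1)) (p a 0)))
      ≤ ∑ a : Fin m, ((∑ i ∈ Finset.range (k - 1), w (p a i) (p a (i + 1)))
        + ∑ i ∈ Finset.range (k - 1), w (p a i) (p a (i + 1))) :=
        Finset.sum_le_sum fun a _ => by linarith [h a]
    _ = 2 * ∑ a : Fin m, ∑ i ∈ Finset.range (k - 1), w (p a i) (p a (i + 1)) := by
        rw [Finset.mul_sum]; exact Finset.sum_congr rfl fun a _ => by ring
end

section
/- Let I be a connected subgraph of a metric complete graph consisting of a union of simple cycles all passing through a common vertex v (and pairwise sharing only v), covering all vertices, where each cycle has length at least 3. If every cycle has length at most k+1, then deleting the longest edge of each cycle yields a spanning tree of weight at most (k/(k+1))·w(I). In particular, (k/(k+1))·w(I) ≥ MST, where MST is the minimum spanning tree weight of the underlying complete graph. -/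
/-- an itinerary `I` (a union of simple cycles of length between 3 and
`k+1`, all through a common vertex `v`, pairwise sharing only `v`, covering all
vertices of a metric complete graph) admits a spanning tree using only edges of `I`
(obtained by deleting the longest edge of each cycle) of weight at most
`(k/(k+1))·w(I)`; in particular `(k/(k+1))·w(I) ≥ MST`. -/
theorem stmt_5 {V : Type*} [Fintype V] (w : V → V → ℝ)
    (hsymm : ∀ a b, w a b = w b a)
    (hnonneg : ∀ a b, 0 ≤ w a b)
    (htri : ∀ a b c, w a c ≤ w a b + w b c)
    (k : ℕ) (hk : 3 ≤ k) (v : V)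
    (m : ℕ) (c : Fin m → ℕ → V) (L : Fin m → ℕ)
    (hL : ∀ j, 3 ≤ L j ∧ L j ≤ k + 1)
    (hbase : ∀ j, c j 0 = v)
    (hinj : ∀ j, ∀ i i', i < L j → i' < L j → c j i = c j i' → i = i')
    (hshare : ∀ j j' : Fin m, j ≠ j' → ∀ i i',
      0 < i → i < L j → 0 < i' → i' < L j' → c j i ≠ c j' i')
    (hcover : ∀ u : V, ∃ j : Fin m, ∃ i < L j, c j i = u) :
    ∃ E' : Finset (V × V),
      E'.card = Fintype.card V - 1 ∧
      (∀ e ∈ E', ∃ j : Fin m, ∃ i < L j,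
        e.1 = c j i ∧ e.2 = c j ((i + 1) % L j)) ∧
      (SimpleGraph.fromRel (fun a b => (a, b) ∈ E' ∨ (b, a) ∈ E')).Connected ∧
      ∑ e ∈ E', w e.1 e.2 ≤
        ((k : ℝ) / ((k : ℝ) + 1)) *
          ∑ j : Fin m, ∑ i ∈ Finset.range (L j), w (c j i) (c j ((i + 1) % L j)) := by
  classical
  have hL3 : ∀ j, 3 ≤ L j := fun j => (hL j).1
  have hLk : ∀ j, L j ≤ k + 1 := fun j => (hL j).2
  have hvz : ∀ (j : Fin m) (i : ℕ), i < L j → c j i = v → i = 0 := by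
    intro j i hi h
    exact hinj j i 0 hi (by have := hL3 j; omega) (by rw [h, hbase])
  -- choose the max-weight edge index of each cycle
  have hMex : ∀ j : Fin m, ∃ b ∈ Finset.range (L j), ∀ b' ∈ Finset.range (L j),
      w (c j b') (c j ((b' + 1) % L j)) ≤ w (c j b) (c j ((b + 1) % L j)) :=
    fun j => Finset.exists_max_image _ _ ⟨0, Finset.mem_range.2 (by have := hL3 j; omega)⟩
  choose M hMmem hMmax using hMex
  have hMlt : ∀ j, M j < L j := fun j => Finset.mem_range.1 (hMmem j)
  have hmodval : ∀ (j : Fin m) (i : ℕ), i < L j →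
      ((i + 1) % L j = i + 1 ∧ i + 1 < L j) ∨ ((i + 1) % L j = 0 ∧ i + 1 = L j) := by
    intro j i hi
    rcases lt_or_eq_of_le (Nat.succ_le_of_lt hi) with h | h
    · exact Or.inl ⟨Nat.mod_eq_of_lt h, h⟩
    · exact Or.inr ⟨by rw [show i + 1 = L j from h, Nat.mod_self], h⟩
  set f : Fin m → ℕ → V × V := fun j i => (c j i, c j ((i + 1) % L j)) with hf
  have hfinj : ∀ j : Fin m, ∀ i ∈ Finset.range (L j), ∀ i' ∈ Finset.range (L j),
      f j i = f j i' → i = i' := by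
    intro j i hi i' hi' h
    exact hinj j i i' (Finset.mem_range.1 hi) (Finset.mem_range.1 hi')
      (congrArg Prod.fst h)
  have hfdisj : ∀ (j j' : Fin m), j ≠ j' → ∀ i i', i < L j → i' < L j' →
      f j i ≠ f j' i' := by
    intro j j' hjj i i' hi hi' h
    have h1 : c j i = c j' i' := congrArg Prod.fst h
    have h2 : c j ((i + 1) % L j) = c j' ((i' + 1) % L j') := congrArg Prod.snd h
    by_cases hi0 : i = 0
    · subst hi0
      have hi'0 : i' = 0 := hvz j' i' hi' (by rw [← h1, hbase])
      subst hi'0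
      have e1 : (0 + 1) % L j = 1 := Nat.mod_eq_of_lt (by have := hL3 j; omega)
      have e2 : (0 + 1) % L j' = 1 := Nat.mod_eq_of_lt (by have := hL3 j'; omega)
      rw [e1, e2] at h2
      exact hshare j j' hjj 1 1 one_pos (by have := hL3 j; omega) one_pos
        (by have := hL3 j'; omega) h2
    · by_cases hi'0 : i' = 0
      · exact hi0 (hvz j i hi (by rw [h1, hi'0, hbase]))
      · exact hshare j j' hjj i i' (Nat.pos_of_ne_zero hi0) hi
          (Nat.pos_of_ne_zero hi'0) hi' h1
  set E' : Finset (V × V) :=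
    Finset.univ.biUnion (fun j => ((Finset.range (L j)).erase (M j)).image (f j)) with hE'
  have hdisjoint : ∀ j ∈ (Finset.univ : Finset (Fin m)), ∀ j' ∈ (Finset.univ : Finset (Fin m)),
      j ≠ j' → Disjoint (((Finset.range (L j)).erase (M j)).image (f j))
        (((Finset.range (L j')).erase (M j')).image (f j')) := by
    intro j _ j' _ hjj
    rw [Finset.disjoint_left]
    rintro e he he'
    obtain ⟨i, hi, rfl⟩ := Finset.mem_image.1 he
    obtain ⟨i', hi', h⟩ := Finset.mem_image.1 he'
    exact hfdisj j j' hjj i i' (Finset.mem_range.1 (Finset.mem_of_mem_erase hi))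
      (Finset.mem_range.1 (Finset.mem_of_mem_erase hi')) h.symm
  -- cardinality of E'
  have hcardE : E'.card = ∑ j : Fin m, (L j - 1) := by
    rw [hE', Finset.card_biUnion hdisjoint]
    refine Finset.sum_congr rfl fun j _ => ?_
    rw [Finset.card_image_of_injOn (fun i hi i' hi' h =>
      hfinj j i (Finset.mem_of_mem_erase hi) i' (Finset.mem_of_mem_erase hi') h),
      Finset.card_erase_of_mem (hMmem j), Finset.card_range]
  -- cardinality of V
  have hcinjV : ∀ j ∈ (Finset.univ : Finset (Fin m)), ∀ j' ∈ (Finset.univ : Finset (Fin m)),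
      j ≠ j' → Disjoint ((Finset.Ioo 0 (L j)).image (c j))
        ((Finset.Ioo 0 (L j')).image (c j')) := by
    intro j _ j' _ hjj
    rw [Finset.disjoint_left]
    rintro u hu hu'
    obtain ⟨i, hi, rfl⟩ := Finset.mem_image.1 hu
    obtain ⟨i', hi', h⟩ := Finset.mem_image.1 hu'
    rw [Finset.mem_Ioo] at hi hi'
    exact hshare j j' hjj i i' hi.1 hi.2 hi'.1 hi'.2 h.symm
  have hvnot : v ∉ Finset.univ.biUnion (fun j => (Finset.Ioo 0 (L j)).image (c j)) := by
    intro hv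
    obtain ⟨j, -, hv⟩ := Finset.mem_biUnion.1 hv
    obtain ⟨i, hi, h⟩ := Finset.mem_image.1 hv
    rw [Finset.mem_Ioo] at hi
    have := hvz j i hi.2 h
    omega
  have huniv : (Finset.univ : Finset V) =
      insert v (Finset.univ.biUnion (fun j => (Finset.Ioo 0 (L j)).image (c j))) := by
    apply Finset.ext
    intro u
    simp only [Finset.mem_univ, true_iff, Finset.mem_insert, Finset.mem_biUnion,
      Finset.mem_image, Finset.mem_Ioo, Finset.mem_univ, true_and]
    obtain ⟨j, i, hi, rfl⟩ := hcover u
    by_cases h0 : i = 0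
    · subst h0; exact Or.inl (hbase j)
    · exact Or.inr ⟨j, i, ⟨Nat.pos_of_ne_zero h0, hi⟩, rfl⟩
  have hcardV : Fintype.card V = 1 + ∑ j : Fin m, (L j - 1) := by
    rw [← Finset.card_univ, huniv, Finset.card_insert_of_notMem hvnot,
      Finset.card_biUnion hcinjV]
    have : ∀ j ∈ (Finset.univ : Finset (Fin m)),
        ((Finset.Ioo 0 (L j)).image (c j)).card = L j - 1 := by
      intro j _
      rw [Finset.card_image_of_injOn (fun i hi i' hi' h => by
        rw [Finset.mem_coe, Finset.mem_Ioo] at hi hi'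
        exact hinj j i i' hi.2 hi'.2 h), Nat.card_Ioo]
      omega
    rw [Finset.sum_congr rfl this]
    omega
  -- membership and adjacency of kept edges
  have hmemE : ∀ (j : Fin m) (i : ℕ), i < L j → i ≠ M j → f j i ∈ E' :=
    fun j i hi hne => Finset.mem_biUnion.2 ⟨j, Finset.mem_univ j,
      Finset.mem_image.2 ⟨i, Finset.mem_erase.2 ⟨hne, Finset.mem_range.2 hi⟩, rfl⟩⟩
  set G := SimpleGraph.fromRel (fun a b => (a, b) ∈ E' ∨ (b, a) ∈ E') with hG
  have hadj : ∀ (j : Fin m) (i : ℕ), i < L j → i ≠ M j →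
      G.Adj (c j i) (c j ((i + 1) % L j)) := by
    intro j i hi hne
    rw [hG, SimpleGraph.fromRel_adj]
    refine ⟨?_, Or.inl (Or.inl (hmemE j i hi hne))⟩
    intro h
    rcases hmodval j i hi with ⟨he, hlt⟩ | ⟨he, heq⟩
    · rw [he] at h
      have := hinj j i (i + 1) hi hlt h
      omega
    · rw [he] at h
      have := hinj j i 0 hi (by have := hL3 j; omega) h
      have := hL3 j
      omega
  -- reachability
  have hdown : ∀ (j : Fin m) (i : ℕ), i ≤ M j → G.Reachable v (c j i) := by
    intro j i
    induction i with
    | zero => intro _; rw [hbase]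
    | succ n ih =>
      intro hle
      have hn : n < L j := by have := hMlt j; omega
      have hadjn := hadj j n hn (by omega)
      have he : (n + 1) % L j = n + 1 := Nat.mod_eq_of_lt (by have := hMlt j; omega)
      rw [he] at hadjn
      exact (ih (by omega)).trans hadjn.reachable
  have hup : ∀ (j : Fin m) (t i : ℕ), M j < i → i < L j → L j - i ≤ t →
      G.Reachable (c j i) v := by
    intro j t
    induction t with
    | zero => intro i h1 h2 h3; omega
    | succ t ih =>
      intro i h1 h2 h3
      have hadji := hadj j i h2 (by omega)
      rcases hmodval j i h2 with ⟨he, hlt⟩ | ⟨he, heq⟩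
      · rw [he] at hadji
        exact hadji.reachable.trans (ih (i + 1) (by omega) hlt (by omega))
      · rw [he, hbase] at hadji
        exact hadji.reachable
  have hreach : ∀ u : V, G.Reachable v u := by
    intro u
    obtain ⟨j, i, hi, rfl⟩ := hcover u
    rcases le_or_gt i (M j) with h | h
    · exact hdown j i h
    · exact (hup j (L j) i h hi (by omega)).symm
  have hconn : G.Connected := by
    rw [SimpleGraph.connected_iff]
    exact ⟨fun a b => (hreach a).symm.trans (hreach b), ⟨v⟩⟩
  -- weight bound
  have hsum : ∑ e ∈ E', w e.1 e.2 = ∑ j : Fin m,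
      ∑ i ∈ (Finset.range (L j)).erase (M j), w (c j i) (c j ((i + 1) % L j)) := by
    rw [hE', Finset.sum_biUnion (fun j _ j' _ hjj => hdisjoint j (Finset.mem_univ j)
      j' (Finset.mem_univ j') hjj)]
    refine Finset.sum_congr rfl fun j _ => ?_
    rw [Finset.sum_image (fun i hi i' hi' h =>
      hfinj j i (Finset.mem_of_mem_erase hi) i' (Finset.mem_of_mem_erase hi') h)]
  have hper : ∀ j : Fin m,
      ∑ i ∈ (Finset.range (L j)).erase (M j), w (c j i) (c j ((i + 1) % L j))
        ≤ ((k : ℝ) / ((k : ℝ) + 1)) *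
          ∑ i ∈ Finset.range (L j), w (c j i) (c j ((i + 1) % L j)) := by
    intro j
    have hSnn : (0 : ℝ) ≤ ∑ i ∈ Finset.range (L j), w (c j i) (c j ((i + 1) % L j)) :=
      Finset.sum_nonneg fun i _ => hnonneg _ _
    have hSle : ∑ i ∈ Finset.range (L j), w (c j i) (c j ((i + 1) % L j))
        ≤ (L j : ℝ) * w (c j (M j)) (c j ((M j + 1) % L j)) := by
      calc ∑ i ∈ Finset.range (L j), w (c j i) (c j ((i + 1) % L j))
          ≤ ∑ i ∈ Finset.range (L j), w (c j (M j)) (c j ((M j + 1) % L j)) :=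
            Finset.sum_le_sum (fun i hi => hMmax j i hi)
        _ = (L j : ℝ) * w (c j (M j)) (c j ((M j + 1) % L j)) := by
            rw [Finset.sum_const, Finset.card_range, nsmul_eq_mul]
    have hLle : (L j : ℝ) ≤ (k : ℝ) + 1 := by exact_mod_cast hLk j
    have hmwnn : 0 ≤ w (c j (M j)) (c j ((M j + 1) % L j)) := hnonneg _ _
    have hSle2 : ∑ i ∈ Finset.range (L j), w (c j i) (c j ((i + 1) % L j))
        ≤ ((k : ℝ) + 1) * w (c j (M j)) (c j ((M j + 1) % L j)) :=
      hSle.trans (by nlinarith)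
    have herase := Finset.add_sum_erase (Finset.range (L j))
      (fun i => w (c j i) (c j ((i + 1) % L j))) (hMmem j)
    have hk1 : (0 : ℝ) < (k : ℝ) + 1 := by positivity
    rw [div_mul_eq_mul_div, le_div_iff₀ hk1]
    nlinarith
  refine ⟨E', ?_, ?_, hconn, ?_⟩
  · rw [hcardE, hcardV]; omega
  · intro e he
    obtain ⟨j, -, he⟩ := Finset.mem_biUnion.1 he
    obtain ⟨i, hi, rfl⟩ := Finset.mem_image.1 he
    exact ⟨j, i, Finset.mem_range.1 (Finset.mem_of_mem_erase hi), rfl, rfl⟩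
  · rw [hsum, Finset.mul_sum]
    exact Finset.sum_le_sum fun j _ => hper j
end

section
/- Let I be a union of simple cycles in a metric complete graph, all passing through a common vertex v and pairwise sharing only v, covering all vertices. If H denotes the weight of the home-edges (edges of I incident to v), then deleting from each cycle the heavier of its two home-edges yields a spanning tree of weight at most w(I) − H/2. Hence w(I) − H/2 ≥ MST, the minimum spanning tree weight of the graph. -/
/-!
Every cycle of the itinerary keeps all its edges but one home-edge, so each cycle becomes a path
hanging off `v`. Distinct cycles meet only in `v`, hence these paths share no edges and together
span all vertices with `∑ⱼ (Lⱼ - 1) = |V| - 1` edges: a spanning tree. The deleted home-edge is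
the heavier of the two, so it weighs at least half of the two home-edges of its cycle.
-/

open Finset

section

variable {V : Type*} {m : ℕ}

structure IsItinerary (v : V) (c : Fin m → ℕ → V) (L : Fin m → ℕ) : Prop where
  two_le : ∀ j, 2 ≤ L j
  base : ∀ j, c j 0 = v
  injOn : ∀ j i i', i < L j → i' < L j → c j i = c j i' → i = i'
  disjoint : ∀ j j' : Fin m, j ≠ j' → ∀ i i',
    0 < i → i < L j → 0 < i' → i' < L j' → c j i ≠ c j' i'

def cycleEdge (c : Fin m → ℕ → V) (L : Fin m → ℕ) (j : Fin m) (i : ℕ) : V × V :=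
  (c j i, c j ((i + 1) % L j))

def prunedEdges [DecidableEq V] (c : Fin m → ℕ → V) (L : Fin m → ℕ) (d : Fin m → ℕ) :
    Finset (V × V) :=
  univ.biUnion fun j => ((range (L j)).erase (d j)).image (cycleEdge c L j)

def prunedGraph [DecidableEq V] (c : Fin m → ℕ → V) (L : Fin m → ℕ) (d : Fin m → ℕ) :
    SimpleGraph V :=
  SimpleGraph.fromRel fun a b => (a, b) ∈ prunedEdges c L d ∨ (b, a) ∈ prunedEdges c L d

/-- Edge `0` of cycle `j` is `(v, c j 1)` and edge `L j - 1` is `(c j (L j - 1), v)`. -/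
noncomputable def heavyHomeIndex (w : V → V → ℝ) (v : V) (c : Fin m → ℕ → V) (L : Fin m → ℕ)
    (j : Fin m) : ℕ :=
  if w (c j (L j - 1)) v ≤ w v (c j 1) then 0 else L j - 1

theorem heavyHomeIndex_eq_zero_or (w : V → V → ℝ) (v : V) (c : Fin m → ℕ → V)
    (L : Fin m → ℕ) (j : Fin m) :
    heavyHomeIndex w v c L j = 0 ∨ heavyHomeIndex w v c L j = L j - 1 := by
  unfold heavyHomeIndex
  split_ifs <;> simp

theorem mem_prunedEdges [DecidableEq V] {c : Fin m → ℕ → V} {L : Fin m → ℕ} {d : Fin m → ℕ}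
    {e : V × V} :
    e ∈ prunedEdges c L d ↔ ∃ j, ∃ i < L j, i ≠ d j ∧ cycleEdge c L j i = e := by
  simp only [prunedEdges, mem_biUnion, mem_univ, true_and, mem_image, mem_erase, mem_range]
  exact ⟨fun ⟨j, i, ⟨hne, hi⟩, he⟩ => ⟨j, i, hi, hne, he⟩,
    fun ⟨j, i, hi, hne, he⟩ => ⟨j, i, ⟨hne, hi⟩, he⟩⟩

theorem SimpleGraph.reachable_of_forall_adj_succ {G : SimpleGraph V} {f : ℕ → V} {a b : ℕ}
    (hab : a ≤ b) (h : ∀ i, a ≤ i → i < b → G.Adj (f i) (f (i + 1))) :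
    G.Reachable (f a) (f b) := by
  induction b, hab using Nat.le_induction with
  | base => rfl
  | succ b hab ih =>
    exact (ih fun i hai hib => h i hai (by omega)).trans (h b hab (by omega)).reachable

namespace IsItinerary

variable {v : V} {c : Fin m → ℕ → V} {L : Fin m → ℕ}

theorem eq_zero_of_apply_eq_base (hI : IsItinerary v c L) {j : Fin m} {i : ℕ} (hi : i < L j)
    (h : c j i = v) : i = 0 :=
  hI.injOn j i 0 hi (by have := hI.two_le j; omega) (by rw [h, hI.base])

theorem cycleEdge_fst_ne_snd (hI : IsItinerary v c L) {j : Fin m} {i : ℕ} (hi : i < L j) :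
    (cycleEdge c L j i).1 ≠ (cycleEdge c L j i).2 := by
  intro h
  have hL := hI.two_le j
  have heq := hI.injOn j _ _ hi (Nat.mod_lt _ (by omega)) h
  rcases Nat.lt_or_ge (i + 1) (L j) with h' | h'
  · rw [Nat.mod_eq_of_lt h'] at heq; omega
  · rw [show i + 1 = L j by omega, Nat.mod_self] at heq; omega

/-- Two cycles share only `v`, so a common edge would have to leave `v` in both, and then its
heads `c j 1 = c j' 1` would be a second common vertex. -/
theorem cycleEdge_inj (hI : IsItinerary v c L) {j j' : Fin m} {i i' : ℕ} (hi : i < L j)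
    (hi' : i' < L j') (h : cycleEdge c L j i = cycleEdge c L j' i') : j = j' ∧ i = i' := by
  obtain ⟨h1, h2⟩ := Prod.mk.inj h
  by_cases hjj : j = j'
  · subst hjj
    exact ⟨rfl, hI.injOn j i i' hi hi' h1⟩
  exfalso
  rcases Nat.eq_zero_or_pos i with rfl | hi0
  · obtain rfl : i' = 0 := hI.eq_zero_of_apply_eq_base hi' (by rw [← h1, hI.base])
    have := hI.two_le j
    have := hI.two_le j'
    simp only [zero_add, Nat.one_mod_eq_one.mpr (by omega : L j ≠ 1),
      Nat.one_mod_eq_one.mpr (by omega : L j' ≠ 1)] at h2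
    exact hI.disjoint j j' hjj 1 1 one_pos (by omega) one_pos (by omega) h2
  · have hi'0 : 0 < i' := Nat.pos_of_ne_zero fun h0 =>
      hi0.ne' (hI.eq_zero_of_apply_eq_base hi (by rw [h1, h0, hI.base]))
    exact hI.disjoint j j' hjj i i' hi0 hi hi'0 hi' h1

theorem heavyHomeIndex_lt (hI : IsItinerary v c L) (w : V → V → ℝ) (j : Fin m) :
    heavyHomeIndex w v c L j < L j := by
  have := hI.two_le j
  rcases heavyHomeIndex_eq_zero_or w v c L j with h | h <;> omega

theorem half_homeEdges_le_heavyHomeEdge (hI : IsItinerary v c L) (w : V → V → ℝ) (j : Fin m) :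
    (w v (c j 1) + w (c j (L j - 1)) v) / 2 ≤
      w (cycleEdge c L j (heavyHomeIndex w v c L j)).1
        (cycleEdge c L j (heavyHomeIndex w v c L j)).2 := by
  have hL := hI.two_le j
  unfold heavyHomeIndex cycleEdge
  split_ifs
  · rw [zero_add, Nat.one_mod_eq_one.mpr (by omega), hI.base]
    linarith
  · rw [Nat.sub_add_cancel (by omega), Nat.mod_self, hI.base]
    linarith

variable [DecidableEq V]

theorem sum_prunedEdges (hI : IsItinerary v c L) {M : Type*} [AddCommMonoid M] (d : Fin m → ℕ)
    (f : V × V → M) :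
    ∑ e ∈ prunedEdges c L d, f e =
      ∑ j, ∑ i ∈ (range (L j)).erase (d j), f (cycleEdge c L j i) := by
  rw [prunedEdges, sum_biUnion]
  · refine sum_congr rfl fun j _ => sum_image fun a ha b hb hab => ?_
    simp only [coe_erase, coe_range, Set.mem_sdiff, Set.mem_Iio] at ha hb
    exact (hI.cycleEdge_inj ha.1 hb.1 hab).2
  · intro j _ j' _ hjj
    simp only [Function.onFun, disjoint_left, mem_image, mem_erase, mem_range]
    rintro e ⟨i, ⟨-, hi⟩, rfl⟩ ⟨i', ⟨-, hi'⟩, hii'⟩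
    exact hjj (hI.cycleEdge_inj hi' hi hii').1.symm

theorem card_prunedEdges (hI : IsItinerary v c L) {d : Fin m → ℕ} (hd : ∀ j, d j < L j) :
    #(prunedEdges c L d) = ∑ j, (L j - 1) := by
  rw [card_eq_sum_ones, hI.sum_prunedEdges]
  simp [card_erase_of_mem, hd]

theorem card_eq_one_add_sum (hI : IsItinerary v c L) [Fintype V]
    (hcover : ∀ u : V, ∃ j : Fin m, ∃ i < L j, c j i = u) :
    Fintype.card V = 1 + ∑ j, (L j - 1) := by
  set S : Finset V := univ.biUnion fun j => ((range (L j)).erase 0).image (c j)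
  have hvS : v ∉ S := by
    simp only [S, mem_biUnion, mem_univ, true_and, mem_image, mem_erase, mem_range, not_exists,
      not_and]
    exact fun j i ⟨hne, hi⟩ hv => hne (hI.eq_zero_of_apply_eq_base hi hv)
  have huniv : insert v S = univ := by
    refine eq_univ_of_forall fun u => ?_
    obtain ⟨j, i, hi, rfl⟩ := hcover u
    rcases Nat.eq_zero_or_pos i with rfl | hi0
    · simp [hI.base]
    · exact mem_insert_of_mem (mem_biUnion.2 ⟨j, mem_univ _,
        mem_image.2 ⟨i, mem_erase.2 ⟨hi0.ne', mem_range.2 hi⟩, rfl⟩⟩)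
  have hScard : #S = ∑ j, (L j - 1) := by
    rw [card_biUnion]
    · refine sum_congr rfl fun j _ => ?_
      rw [card_image_of_injOn, card_erase_of_mem (mem_range.2 (by have := hI.two_le j; omega)),
        card_range]
      intro a ha b hb hab
      simp only [coe_erase, coe_range, Set.mem_sdiff, Set.mem_Iio] at ha hb
      exact hI.injOn j a b ha.1 hb.1 hab
    · intro j _ j' _ hjj
      simp only [Function.onFun, disjoint_left, mem_image, mem_erase, mem_range]
      rintro u ⟨i, ⟨hi0, hi⟩, rfl⟩ ⟨i', ⟨hi'0, hi'⟩, hii'⟩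
      exact hI.disjoint j j' hjj i i' (Nat.pos_of_ne_zero hi0) hi (Nat.pos_of_ne_zero hi'0) hi'
        hii'.symm
  rw [← card_univ, ← huniv, card_insert_of_notMem hvS, hScard, add_comm]

theorem prunedGraph_adj (hI : IsItinerary v c L) {d : Fin m → ℕ} {j : Fin m} {i : ℕ}
    (hi : i < L j) (hid : i ≠ d j) :
    (prunedGraph c L d).Adj (c j i) (c j ((i + 1) % L j)) :=
  (SimpleGraph.fromRel_adj _ _ _).2
    ⟨hI.cycleEdge_fst_ne_snd hi, Or.inl (Or.inl (mem_prunedEdges.2 ⟨j, i, hi, hid, rfl⟩))⟩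

/-- Deleting edge `0` leaves the path `c j i, …, c j (L j - 1), v`; deleting edge `L j - 1`
leaves the path `v, c j 1, …, c j i`. -/
theorem prunedGraph_reachable_base (hI : IsItinerary v c L) {d : Fin m → ℕ} {j : Fin m}
    (hd : d j = 0 ∨ d j = L j - 1) {i : ℕ} (hi : i < L j) :
    (prunedGraph c L d).Reachable (c j i) v := by
  have hL := hI.two_le j
  have hpath : ∀ a b, a ≤ b → b < L j → (∀ k, a ≤ k → k < b → k ≠ d j) →
      (prunedGraph c L d).Reachable (c j a) (c j b) := fun a b hab hb hd' =>
    SimpleGraph.reachable_of_forall_adj_succ hab fun k hak hkb => by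
      simpa only [Nat.mod_eq_of_lt (by omega : k + 1 < L j)] using
        hI.prunedGraph_adj (by omega) (hd' k hak hkb)
  rcases hd with hd | hd
  · rcases Nat.eq_zero_or_pos i with rfl | hi0
    · rw [hI.base]
    have hlast := hI.prunedGraph_adj (d := d) (j := j) (i := L j - 1) (by omega) (by omega)
    rw [Nat.sub_add_cancel (by omega), Nat.mod_self, hI.base] at hlast
    exact (hpath i (L j - 1) (by omega) (by omega) fun k hik _ => by omega).trans
      hlast.reachable
  · rw [← hI.base j]
    exact (hpath 0 i (Nat.zero_le i) hi fun k _ hki => by omega).symm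

theorem prunedGraph_connected (hI : IsItinerary v c L) [Fintype V]
    (hcover : ∀ u : V, ∃ j : Fin m, ∃ i < L j, c j i = u) {d : Fin m → ℕ}
    (hd : ∀ j, d j = 0 ∨ d j = L j - 1) : (prunedGraph c L d).Connected := by
  refine (SimpleGraph.connected_iff _).2 ⟨fun a b => ?_, ⟨v⟩⟩
  obtain ⟨j, i, hi, rfl⟩ := hcover a
  obtain ⟨j', i', hi', rfl⟩ := hcover b
  exact (hI.prunedGraph_reachable_base (hd j) hi).trans
    (hI.prunedGraph_reachable_base (hd j') hi').symm

theorem sum_prunedEdges_heavyHomeIndex_le (hI : IsItinerary v c L) (w : V → V → ℝ) :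
    ∑ e ∈ prunedEdges c L (heavyHomeIndex w v c L), w e.1 e.2 ≤
      (∑ j, ∑ i ∈ range (L j), w (c j i) (c j ((i + 1) % L j)))
        - (∑ j, (w v (c j 1) + w (c j (L j - 1)) v)) / 2 := by
  rw [hI.sum_prunedEdges, sum_div, ← sum_sub_distrib]
  refine sum_le_sum fun j _ => ?_
  have hheavy := hI.half_homeEdges_le_heavyHomeEdge w j
  rw [sum_erase_eq_sub (mem_range.2 (hI.heavyHomeIndex_lt w j))]
  dsimp only [cycleEdge] at hheavy ⊢
  linarith

end IsItinerary

end

theorem stmt_6_general {V : Type*} [Fintype V] (w : V → V → ℝ)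
    (v : V) (m : ℕ) (c : Fin m → ℕ → V) (L : Fin m → ℕ)
    (hL : ∀ j, 3 ≤ L j)
    (hbase : ∀ j, c j 0 = v)
    (hinj : ∀ j, ∀ i i', i < L j → i' < L j → c j i = c j i' → i = i')
    (hshare : ∀ j j' : Fin m, j ≠ j' → ∀ i i',
      0 < i → i < L j → 0 < i' → i' < L j' → c j i ≠ c j' i')
    (hcover : ∀ u : V, ∃ j : Fin m, ∃ i < L j, c j i = u) :
    ∃ E' : Finset (V × V),
      E'.card = Fintype.card V - 1 ∧
      (∀ e ∈ E', ∃ j : Fin m, ∃ i < L j,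
        e.1 = c j i ∧ e.2 = c j ((i + 1) % L j)) ∧
      (SimpleGraph.fromRel (fun a b => (a, b) ∈ E' ∨ (b, a) ∈ E')).Connected ∧
      ∑ e ∈ E', w e.1 e.2 ≤
        (∑ j : Fin m, ∑ i ∈ Finset.range (L j), w (c j i) (c j ((i + 1) % L j)))
          - (∑ j : Fin m, (w v (c j 1) + w (c j (L j - 1)) v)) / 2 := by
  classical
  have hI : IsItinerary v c L := ⟨fun j => (hL j).trans' (by norm_num), hbase, hinj, hshare⟩
  refine ⟨prunedEdges c L (heavyHomeIndex w v c L), ?_, ?_,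
    hI.prunedGraph_connected hcover (heavyHomeIndex_eq_zero_or w v c L),
    hI.sum_prunedEdges_heavyHomeIndex_le w⟩
  · rw [hI.card_prunedEdges (hI.heavyHomeIndex_lt w), hI.card_eq_one_add_sum hcover,
      Nat.add_sub_cancel_left]
  · intro e he
    obtain ⟨j, i, hi, -, rfl⟩ := mem_prunedEdges.1 he
    exact ⟨j, i, hi, rfl, rfl⟩

/-- for an itinerary `I` (union of simple cycles of length ≥ 3 through a
common vertex `v`, pairwise sharing only `v`, covering all vertices), deleting from
each cycle the heavier of its two home-edges yields a spanning tree of weight at most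
`w(I) − H/2`, where `H` is the total weight of the home-edges; hence `w(I) − H/2 ≥ MST`. -/
theorem stmt_6 {V : Type*} [Fintype V] (w : V → V → ℝ)
    (hsymm : ∀ a b, w a b = w b a)
    (hnonneg : ∀ a b, 0 ≤ w a b)
    (htri : ∀ a b c, w a c ≤ w a b + w b c)
    (v : V) (m : ℕ) (c : Fin m → ℕ → V) (L : Fin m → ℕ)
    (hL : ∀ j, 3 ≤ L j)
    (hbase : ∀ j, c j 0 = v)
    (hinj : ∀ j, ∀ i i', i < L j → i' < L j → c j i = c j i' → i = i')
    (hshare : ∀ j j' : Fin m, j ≠ j' → ∀ i i',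
      0 < i → i < L j → 0 < i' → i' < L j' → c j i ≠ c j' i')
    (hcover : ∀ u : V, ∃ j : Fin m, ∃ i < L j, c j i = u) :
    ∃ E' : Finset (V × V),
      E'.card = Fintype.card V - 1 ∧
      (∀ e ∈ E', ∃ j : Fin m, ∃ i < L j,
        e.1 = c j i ∧ e.2 = c j ((i + 1) % L j)) ∧
      (SimpleGraph.fromRel (fun a b => (a, b) ∈ E' ∨ (b, a) ∈ E')).Connected ∧
      ∑ e ∈ E', w e.1 e.2 ≤
        (∑ j : Fin m, ∑ i ∈ Finset.range (L j), w (c j i) (c j ((i + 1) % L j)))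
          - (∑ j : Fin m, (w v (c j 1) + w (c j (L j - 1)) v)) / 2 :=
  stmt_6_general w v m c L hL hbase hinj hshare hcover
end

section
/- Let u and u' be two disjoint finite sets of points in a metric space, each of size k, and let U = u ∪ u'. Define w(u,u') = Σ_{x∈u, y∈u'} d(x,y), w(u) = Σ_{{x,y}⊆u} d(x,y), and w(U) = Σ_{{x,y}⊆U} d(x,y). Then w(u) ≤ w(u,u') and w(u') ≤ w(u,u'), and consequently w(U) = w(u) + w(u') + w(u,u') ≤ 3·w(u,u'). -/
/-- for disjoint `k`-element point sets `u, u'` in a metric space,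
with `w(u) = Σ_{pairs in u} d`, `w(u,u') = Σ_{x∈u,y∈u'} d(x,y)` and
`w(U) = Σ_{pairs in U} d` for `U = u ∪ u'`, we have `w(u) ≤ w(u,u')`,
`w(u') ≤ w(u,u')`, `w(U) = w(u) + w(u') + w(u,u')`, and `w(U) ≤ 3·w(u,u')`.
(Here `w(u)` is written as `(1/2)·Σ_{x∈u}Σ_{y∈u} d(x,y)`.) -/
theorem stmt_10 {X : Type*} [PseudoMetricSpace X] [DecidableEq X]
    (k : ℕ) (hk : 1 ≤ k)
    (u u' : Finset X) (hu : u.card = k) (hu' : u'.card = k)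
    (hdisj : Disjoint u u') :
    (1 / 2 : ℝ) * (∑ x ∈ u, ∑ y ∈ u, dist x y) ≤ ∑ x ∈ u, ∑ y ∈ u', dist x y ∧
    (1 / 2 : ℝ) * (∑ x ∈ u', ∑ y ∈ u', dist x y) ≤ ∑ x ∈ u, ∑ y ∈ u', dist x y ∧
    (1 / 2 : ℝ) * (∑ x ∈ u ∪ u', ∑ y ∈ u ∪ u', dist x y)
      = (1 / 2 : ℝ) * (∑ x ∈ u, ∑ y ∈ u, dist x y)
        + (1 / 2 : ℝ) * (∑ x ∈ u', ∑ y ∈ u', dist x y)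
        + ∑ x ∈ u, ∑ y ∈ u', dist x y ∧
    (1 / 2 : ℝ) * (∑ x ∈ u ∪ u', ∑ y ∈ u ∪ u', dist x y)
      ≤ 3 * ∑ x ∈ u, ∑ y ∈ u', dist x y := by
  have key : ∀ (a b : Finset X), a.card = k → b.card = k →
      (1 / 2 : ℝ) * (∑ x ∈ a, ∑ y ∈ a, dist x y) ≤ ∑ x ∈ a, ∑ y ∈ b, dist x y := by
    intro a b ha hb
    have hkpos : (0:ℝ) < (k:ℝ) := by exact_mod_cast hk
    have h1 : (k:ℝ) * (∑ x ∈ a, ∑ y ∈ a, dist x y)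
        ≤ 2 * (k:ℝ) * (∑ x ∈ a, ∑ y ∈ b, dist x y) := by
      have : (k:ℝ) * (∑ x ∈ a, ∑ y ∈ a, dist x y)
          = ∑ x ∈ a, ∑ x' ∈ a, ∑ y ∈ b, dist x x' := by
        rw [Finset.mul_sum]
        refine Finset.sum_congr rfl fun x _ => ?_
        rw [Finset.mul_sum]
        refine Finset.sum_congr rfl fun x' _ => ?_
        rw [Finset.sum_const, hb, nsmul_eq_mul, mul_comm]
      rw [this]
      have h2 : ∑ x ∈ a, ∑ x' ∈ a, ∑ y ∈ b, dist x x'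
          ≤ ∑ x ∈ a, ∑ x' ∈ a, ∑ y ∈ b, (dist x y + dist x' y) := by
        refine Finset.sum_le_sum fun x _ => Finset.sum_le_sum fun x' _ =>
          Finset.sum_le_sum fun y _ => ?_
        calc dist x x' ≤ dist x y + dist y x' := dist_triangle _ _ _
          _ = dist x y + dist x' y := by rw [dist_comm y x']
      refine h2.trans_eq ?_
      have e1 : ∑ x ∈ a, ∑ x' ∈ a, ∑ y ∈ b, (dist x y + dist x' y)
          = ∑ x ∈ a, ∑ x' ∈ a, ((∑ y ∈ b, dist x y) + ∑ y ∈ b, dist x' y) := by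
        simp [Finset.sum_add_distrib]
      rw [e1]
      simp only [Finset.sum_add_distrib, Finset.sum_const, ha, nsmul_eq_mul]
      rw [← Finset.mul_sum]
      ring
    nlinarith [h1]
  have h1 := key u u' hu hu'
  have h2' := key u' u hu' hu
  have hswap : ∑ x ∈ u', ∑ y ∈ u, dist x y = ∑ x ∈ u, ∑ y ∈ u', dist x y := by
    rw [Finset.sum_comm]
    simp [dist_comm]
  rw [hswap] at h2'
  have hsplit : (∑ x ∈ u ∪ u', ∑ y ∈ u ∪ u', dist x y)
      = (∑ x ∈ u, ∑ y ∈ u, dist x y) + (∑ x ∈ u', ∑ y ∈ u', dist x y)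
        + 2 * ∑ x ∈ u, ∑ y ∈ u', dist x y := by
    rw [Finset.sum_union hdisj]
    have : ∀ x : X, ∑ y ∈ u ∪ u', dist x y = ∑ y ∈ u, dist x y + ∑ y ∈ u', dist x y :=
      fun x => Finset.sum_union hdisj
    simp only [this, Finset.sum_add_distrib]
    rw [hswap]
    ring
  refine ⟨h1, h2', ?_, ?_⟩
  · rw [hsplit]; ring
  · rw [hsplit]; nlinarith [h1, h2']
end

section
/- Consider the linear program: maximize y subject to y ≤ 4/3 + (1/3)·x, y ≤ 1 − (1/6)·γ + x, y ≤ (8ρ+6)/9 + ((4ρ−3)/9)·γ − ((4ρ−2)/3)·x, and 0 ≤ x ≤ γ ≤ 1, where ρ ≥ 1 is a fixed parameter. The optimal value equals 11/6 − 5/(2(4ρ+1)) if ρ ≤ 9/4, and 5/3 − 2/(3(4ρ−1)) if ρ > 9/4. -/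
/-!
Both constraint pairs give an upper bound valid for every `ρ ≥ 1`: adding `(4ρ-2)/3` times the
second constraint to the third eliminates `x` and leaves `y ≤ 11/6 - 5/(2(4ρ+1))` (the remaining
`γ`-coefficient is `(4ρ-4)/18 ≥ 0`, so `γ = 1` is worst), and adding `4ρ-2` times the first to the
third gives `y ≤ 5/3 - 2/(3(4ρ-1))`. The two bounds cross at `ρ = 9/4`, and the smaller one is
attained at `γ = 1` by the `x` making the two constraints of its pair tight.
-/

def lpValues (ρ : ℝ) : Set ℝ :=
  {y : ℝ | ∃ x γ : ℝ, 0 ≤ x ∧ x ≤ γ ∧ γ ≤ 1 ∧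
    y ≤ 4 / 3 + x / 3 ∧ y ≤ 1 - γ / 6 + x ∧
    y ≤ (8 * ρ + 6) / 9 + ((4 * ρ - 3) / 9) * γ - ((4 * ρ - 2) / 3) * x}

section

variable {ρ y : ℝ}

theorem le_of_mem_lpValues_of_one_le (hρ : 1 ≤ ρ) (hy : y ∈ lpValues ρ) :
    y ≤ 11 / 6 - 5 / (2 * (4 * ρ + 1)) := by
  obtain ⟨x, γ, -, -, hγ, -, h₂, h₃⟩ := hy
  have hd : 0 < 4 * ρ + 1 := by linarith
  rw [show 11 / 6 - 5 / (2 * (4 * ρ + 1)) = (22 * ρ - 2) / (3 * (4 * ρ + 1)) by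
    field_simp; ring, le_div_iff₀ (by positivity)]
  have h₂' := mul_le_mul_of_nonneg_left h₂ (by linarith : (0 : ℝ) ≤ 4 * ρ - 2)
  have hγ' := mul_le_mul_of_nonneg_left hγ (by linarith : (0 : ℝ) ≤ 2 * ρ - 2)
  linear_combination 3 * h₂' + 9 * h₃ + hγ'

theorem le_of_mem_lpValues_of_three_fourths_le (hρ : 3 / 4 ≤ ρ) (hy : y ∈ lpValues ρ) :
    y ≤ 5 / 3 - 2 / (3 * (4 * ρ - 1)) := by
  obtain ⟨x, γ, -, -, hγ, h₁, -, h₃⟩ := hy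
  have hd : 0 < 4 * ρ - 1 := by linarith
  rw [show 5 / 3 - 2 / (3 * (4 * ρ - 1)) = (20 * ρ - 7) / (3 * (4 * ρ - 1)) by
    field_simp; ring, le_div_iff₀ (by positivity)]
  have h₁' := mul_le_mul_of_nonneg_left h₁ (by linarith : (0 : ℝ) ≤ 4 * ρ - 2)
  have hγ' := mul_le_mul_of_nonneg_left hγ (by linarith : (0 : ℝ) ≤ (4 * ρ - 3) / 3)
  linear_combination 3 * h₁' + 3 * h₃ + hγ'

theorem mem_lpValues_of_le_nine_fourths (hρ : 3 / 8 ≤ ρ) (hρ' : ρ ≤ 9 / 4) :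
    11 / 6 - 5 / (2 * (4 * ρ + 1)) ∈ lpValues ρ := by
  have hd : 0 < 4 * ρ + 1 := by linarith
  set x := (8 * ρ - 3) / (2 * (4 * ρ + 1)) with hx
  have hy : 11 / 6 - 5 / (2 * (4 * ρ + 1)) = 5 / 6 + x := by rw [hx]; field_simp; ring
  have hx₀ : 0 ≤ x := div_nonneg (by linarith) (by positivity)
  have hx₁ : x ≤ 3 / 4 := by rw [div_le_iff₀ (by positivity)]; linarith
  have h₃ : 5 / 6 + x = (12 * ρ + 3) / 9 - ((4 * ρ - 2) / 3) * x := by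
    rw [hx]; field_simp; ring
  refine ⟨x, 1, hx₀, by linarith, le_rfl, ?_, ?_, ?_⟩ <;> linarith

theorem mem_lpValues_of_nine_fourths_le (hρ : 9 / 4 ≤ ρ) :
    5 / 3 - 2 / (3 * (4 * ρ - 1)) ∈ lpValues ρ := by
  have hd : 0 < 4 * ρ - 1 := by linarith
  set x := (4 * ρ - 3) / (4 * ρ - 1) with hx
  have hy : 5 / 3 - 2 / (3 * (4 * ρ - 1)) = 4 / 3 + x / 3 := by rw [hx]; field_simp; ring
  have hx_ge : 3 / 4 ≤ x := by rw [le_div_iff₀ hd]; linarith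
  have hx₁ : x ≤ 1 := by rw [div_le_one hd]; linarith
  have h₃ : 4 / 3 + x / 3 = (12 * ρ + 3) / 9 - ((4 * ρ - 2) / 3) * x := by
    rw [hx]; field_simp; ring
  refine ⟨x, 1, by linarith, hx₁, le_rfl, ?_, ?_, ?_⟩ <;> linarith

end

/-- the value of the LP
`max y s.t. y ≤ 4/3 + x/3, y ≤ 1 − γ/6 + x, y ≤ (8ρ+6)/9 + ((4ρ−3)/9)γ − ((4ρ−2)/3)x,
0 ≤ x ≤ γ ≤ 1` equals `11/6 − 5/(2(4ρ+1))` if `ρ ≤ 9/4` and `5/3 − 2/(3(4ρ−1))`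
otherwise (for any fixed parameter `ρ ≥ 1`). -/
theorem stmt_11 (ρ : ℝ) (hρ : 1 ≤ ρ) :
    IsGreatest {y : ℝ | ∃ x γ : ℝ, 0 ≤ x ∧ x ≤ γ ∧ γ ≤ 1 ∧
        y ≤ 4 / 3 + x / 3 ∧ y ≤ 1 - γ / 6 + x ∧
        y ≤ (8 * ρ + 6) / 9 + ((4 * ρ - 3) / 9) * γ - ((4 * ρ - 2) / 3) * x}
      (if ρ ≤ 9 / 4 then 11 / 6 - 5 / (2 * (4 * ρ + 1))
        else 5 / 3 - 2 / (3 * (4 * ρ - 1))) := by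
  change IsGreatest (lpValues ρ) _
  split_ifs with h
  · exact ⟨mem_lpValues_of_le_nine_fourths (by linarith) h,
      fun _ hy ↦ le_of_mem_lpValues_of_one_le hρ hy⟩
  · exact ⟨mem_lpValues_of_nine_fourths_le (by linarith),
      fun _ hy ↦ le_of_mem_lpValues_of_three_fourths_le (by linarith) hy⟩
end

section
/- For all real numbers x and γ with 0 ≤ x ≤ γ ≤ 1, min{ 3/2 + (1/8)·γ + (1/8)·x , 39/16 + (5/16)·γ − (7/4)·x } ≤ 17/10, and this bound is attained for some feasible (x, γ). That is, max over 0 ≤ x ≤ γ ≤ 1 of the minimum of these two affine functions equals 17/10. -/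
/-- `max_{0 ≤ x ≤ γ ≤ 1} min{3/2 + γ/8 + x/8, 39/16 + 5γ/16 − 7x/4} = 17/10`. -/
theorem stmt_12 :
    IsGreatest {y : ℝ | ∃ x γ : ℝ, 0 ≤ x ∧ x ≤ γ ∧ γ ≤ 1 ∧
        y = min (3 / 2 + γ / 8 + x / 8) (39 / 16 + 5 * γ / 16 - 7 * x / 4)}
      (17 / 10) := by
  constructor
  · exact ⟨3/5, 1, by norm_num, by norm_num, le_refl 1, by norm_num⟩
  · rintro y ⟨x, γ, hx, hxg, hg1, rfl⟩
    rcases le_total (3 / 2 + γ / 8 + x / 8) (39 / 16 + 5 * γ / 16 - 7 * x / 4) with h | h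
    · rw [min_eq_left h]; linarith
    · rw [min_eq_right h]; linarith
end

section
/- Consider n teams located at points t_1 < t_2 < ... < t_n on a line, with d_i the distance between t_i and t_{i+1}. In any feasible TTP-k schedule (each team's travel is a sequence of road trips from home visiting at most k opponents before returning), the total travel distance of all teams is at least Σ_{i=1}^{n−1} c_i·d_i, where c_i = 2·i·⌈(n−i)/k⌉ + 2·(n−i)·⌈i/k⌉. The key counting step: each of the i teams left of the gap (t_i, t_{i+1}) needs at least ⌈(n−i)/k⌉ round trips crossing this gap, and each of the n−i teams on the right needs at least ⌈i/k⌉ such round trips, and every round trip crosses the gap twice. -/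
/-!
The cost of a walk on the line is the sum, over the gaps between consecutive teams, of the gap
length times the number of times the walk crosses that gap. Fix the gap between teams `j` and
`j + 1`. A round trip of team `a` that visits a team on the other side crosses the gap at least
twice; since `a` must visit all `s` teams on the other side and a trip visits at most `k` teams,
at least `⌈s/k⌉` of its trips do so. Summing over the `j + 1` teams on the left (`s = n - j - 1`)
and the `n - j - 1` teams on the right (`s = j + 1`) gives the coefficient of that gap.
-/

/-- The travel cost of walking along a list of positions (indexed in `ℕ`) on the line
with coordinates `t`. -/
def lineWalkCost (t : ℕ → ℝ) (l : List ℕ) : ℝ :=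
  ((l.zip l.tail).map (fun p => |t p.1 - t p.2|)).sum

section Crossings

variable {α : Type*} (p : α → Prop) [DecidablePred p]

def crossings : List α → ℕ
  | x :: y :: l => (if p x ↔ p y then 0 else 1) + crossings (y :: l)
  | _ => 0

variable {p}

lemma crossings_append_cons (l₁ l₂ : List α) (x : α) :
    crossings p (l₁ ++ x :: l₂) = crossings p (l₁ ++ [x]) + crossings p (x :: l₂) := by
  induction l₁ with
  | nil => simp [crossings]
  | cons y l₁ ih =>
    cases l₁ with
    | nil => simp [crossings]
    | cons z l₁ => simp only [List.cons_append, crossings] at ih ⊢; omega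

lemma one_le_crossings {x y : α} (h : ¬(p x ↔ p y)) (l : List α) :
    1 ≤ crossings p (x :: l ++ [y]) := by
  induction l generalizing x with
  | nil => simp [crossings, h]
  | cons z l ih =>
    by_cases hz : p z ↔ p y
    · simp [crossings, hz, h]
    · simp only [List.cons_append, crossings] at ih ⊢
      have := ih hz
      omega

lemma two_le_crossings_of_mem {a b : α} {l : List α} (hb : b ∈ l) (h : ¬(p a ↔ p b)) :
    2 ≤ crossings p (a :: l ++ [a]) := by
  obtain ⟨l₁, l₂, rfl⟩ := List.append_of_mem hb
  have h₁ := one_le_crossings h l₁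
  have h₂ := one_le_crossings (fun h' => h h'.symm) l₂
  rw [List.cons_append, List.append_assoc, List.cons_append, ← List.cons_append,
    crossings_append_cons]
  exact Nat.add_le_add h₁ h₂

end Crossings

section LineCost

variable {t : ℕ → ℝ}

lemma lineWalkCost_cons_cons (x y : ℕ) (l : List ℕ) :
    lineWalkCost t (x :: y :: l) = |t x - t y| + lineWalkCost t (y :: l) := by
  simp [lineWalkCost]

lemma abs_sub_eq_sum_crossings (ht : Monotone t) {n : ℕ} (x y : Fin n) :
    |t x - t y| = ∑ j ∈ Finset.range (n - 1),
      (crossings (fun b : Fin n => (b : ℕ) < j + 1) [x, y] : ℝ) * (t (j + 1) - t j) := by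
  wlog hxy : x ≤ y generalizing x y
  · rw [abs_sub_comm, this y x (le_of_not_ge hxy)]
    simp [crossings, iff_comm]
  have hsep : (Finset.range (n - 1)).filter (fun j => ¬((x : ℕ) < j + 1 ↔ (y : ℕ) < j + 1))
      = Finset.Ico (x : ℕ) y := by
    ext j
    simp only [Finset.mem_filter, Finset.mem_range, Finset.mem_Ico]
    omega
  rw [abs_sub_comm, abs_of_nonneg (sub_nonneg.mpr (ht hxy)), ← Finset.sum_Ico_sub _ hxy, ← hsep,
    Finset.sum_filter]
  refine Finset.sum_congr rfl fun j _ => ?_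
  by_cases h : (x : ℕ) < j + 1 ↔ (y : ℕ) < j + 1 <;> simp [crossings, h]

lemma lineWalkCost_map_val (ht : Monotone t) {n : ℕ} (l : List (Fin n)) :
    lineWalkCost t (l.map Fin.val) = ∑ j ∈ Finset.range (n - 1),
      (crossings (fun b : Fin n => (b : ℕ) < j + 1) l : ℝ) * (t (j + 1) - t j) := by
  match l with
  | [] | [_] => simp [lineWalkCost, crossings]
  | x :: y :: l =>
    rw [List.map_cons, List.map_cons, lineWalkCost_cons_cons, ← List.map_cons,
      lineWalkCost_map_val ht (y :: l), abs_sub_eq_sum_crossings ht, ← Finset.sum_add_distrib]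
    refine Finset.sum_congr rfl fun j _ => ?_
    simp only [crossings, Nat.cast_add, add_mul, add_zero]

end LineCost

section Counting

lemma ceil_div_le_of_le_mul {s m k : ℕ} (h : s ≤ m * k) : (s + k - 1) / k ≤ m := by
  rcases Nat.eq_zero_or_pos k with rfl | hk
  · simp
  · rw [Nat.div_le_iff_le_mul_add_pred hk, mul_comm]
    omega

lemma mul_countP_le_sum_map {γ : Type*} {L : List γ} {P : γ → Bool} {f : γ → ℕ} {c : ℕ}
    (h : ∀ x ∈ L, P x → c ≤ f x) : c * L.countP P ≤ (L.map f).sum := by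
  induction L with
  | nil => simp
  | cons x L ih =>
    have hL := ih fun y hy => h y (List.mem_cons_of_mem x hy)
    by_cases hx : P x
    · have := h x List.mem_cons_self hx
      simp only [List.countP_cons, hx, if_true, List.map_cons, List.sum_cons]
      lia
    · simpa [List.countP_cons, hx] using le_add_left hL

variable {β : Type*} [DecidableEq β] {k : ℕ}

lemma card_le_countP_mul {L : List (List β)} (hlen : ∀ tr ∈ L, tr.length ≤ k)
    {B : Finset β} (hB : ∀ b ∈ B, ∃ tr ∈ L, b ∈ tr) :
    B.card ≤ L.countP (fun tr => tr.any (· ∈ B)) * k := by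
  set F := L.filter (fun tr => tr.any (· ∈ B))
  have hsub : B ⊆ F.flatten.toFinset := by
    intro b hb
    obtain ⟨tr, htr, hbtr⟩ := hB b hb
    simpa [F] using ⟨tr, ⟨htr, b, hbtr, hb⟩, hbtr⟩
  have hlenF : ∀ m ∈ F.map List.length, m ≤ k := by
    intro m hm
    obtain ⟨tr, htr, rfl⟩ := List.mem_map.mp hm
    exact hlen tr (List.mem_of_mem_filter htr)
  calc B.card ≤ F.flatten.toFinset.card := Finset.card_le_card hsub
    _ ≤ F.flatten.length := List.toFinset_card_le _
    _ = (F.map List.length).sum := List.length_flatten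
    _ ≤ (F.map List.length).length * k := List.sum_le_card_nsmul _ _ hlenF
    _ = _ := by rw [List.length_map, List.countP_eq_length_filter]

lemma two_mul_ceil_div_le_sum_crossings (p : β → Prop) [DecidablePred p] {a : β}
    {L : List (List β)} (hlen : ∀ tr ∈ L, tr.length ≤ k)
    {B : Finset β} (hB : ∀ b ∈ B, ∃ tr ∈ L, b ∈ tr) (hside : ∀ b ∈ B, ¬(p a ↔ p b)) :
    2 * ((B.card + k - 1) / k) ≤ (L.map fun tr => crossings p (a :: tr ++ [a])).sum := by
  calc 2 * ((B.card + k - 1) / k) ≤ 2 * L.countP (fun tr => tr.any (· ∈ B)) :=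
        Nat.mul_le_mul_left 2 (ceil_div_le_of_le_mul (card_le_countP_mul hlen hB))
    _ ≤ _ := mul_countP_le_sum_map fun tr _ htr => by
        obtain ⟨b, hbtr, hb⟩ := by simpa using htr
        exact two_le_crossings_of_mem hbtr (hside b hb)

end Counting

lemma list_sum_map_finset_sum {ι γ M : Type*} [AddCommMonoid M] (L : List γ) (s : Finset ι)
    (f : γ → ι → M) : (L.map fun x => ∑ i ∈ s, f x i).sum = ∑ i ∈ s, (L.map (f · i)).sum := by
  induction L <;> simp_all [Finset.sum_add_distrib]

lemma card_filter_not_val_lt_succ {n j : ℕ} (hj : j < n) :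
    (Finset.univ.filter fun b : Fin n => ¬((b : ℕ) < j + 1)).card = n - j - 1 := by
  have := Finset.card_filter_add_card_filter_not (s := Finset.univ)
    (p := fun b : Fin n => (b : ℕ) < j + 1)
  rw [Fin.card_filter_val_lt, Finset.card_univ, Fintype.card_fin] at this
  omega

lemma gap_coefficient_le_sum_crossings {n k j : ℕ} (hj : j < n)
    (trips : Fin n → List (List (Fin n)))
    (hlen : ∀ a, ∀ tr ∈ trips a, tr.length ≤ k)
    (hcover : ∀ a b : Fin n, a ≠ b → ∃ tr ∈ trips a, b ∈ tr) :
    2 * (j + 1) * ((n - j - 1 + k - 1) / k) + 2 * (n - j - 1) * ((j + 1 + k - 1) / k)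
      ≤ ∑ a : Fin n, ((trips a).map fun tr =>
          crossings (fun b : Fin n => (b : ℕ) < j + 1) (a :: tr ++ [a])).sum := by
  set p : Fin n → Prop := fun b => (b : ℕ) < j + 1
  set opp : Fin n → Finset (Fin n) := fun a => Finset.univ.filter fun b => ¬(p a ↔ p b)
  have hleft : (Finset.univ.filter p).card = j + 1 := by
    simp only [p, Fin.card_filter_val_lt]; omega
  have hright : (Finset.univ.filter fun b => ¬p b).card = n - j - 1 :=
    card_filter_not_val_lt_succ hj
  have hopp : ∀ a, (opp a).card = if p a then n - j - 1 else j + 1 := by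
    intro a
    by_cases ha : p a
    · simp only [opp, ha, true_iff, if_true, ← hright]
    · simp only [opp, ha, false_iff, not_not, if_false, ← hleft]
  calc 2 * (j + 1) * ((n - j - 1 + k - 1) / k) + 2 * (n - j - 1) * ((j + 1 + k - 1) / k)
      = ∑ a : Fin n, 2 * (((opp a).card + k - 1) / k) := by
        have hterm : ∀ a, 2 * (((opp a).card + k - 1) / k)
            = if p a then 2 * ((n - j - 1 + k - 1) / k) else 2 * ((j + 1 + k - 1) / k) := by
          intro a
          rw [hopp]
          split_ifs <;> rfl
        rw [Finset.sum_congr rfl fun a _ => hterm a, Finset.sum_ite, Finset.sum_const,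
          Finset.sum_const, hleft, hright, smul_eq_mul, smul_eq_mul]
        ring
    _ ≤ _ := Finset.sum_le_sum fun a _ =>
        two_mul_ceil_div_le_sum_crossings p (hlen a)
          (fun b hb => hcover a b fun hab => by simp [opp, hab] at hb)
          (fun b hb => (Finset.mem_filter.mp hb).2)

theorem stmt_16_general (n k : ℕ)
    (t : ℕ → ℝ) (hmono : Monotone t)
    (trips : Fin n → List (List (Fin n)))
    (hlen : ∀ a, ∀ tr ∈ trips a, tr.length ≤ k)
    (hcover : ∀ a b : Fin n, a ≠ b → ∃ tr ∈ trips a, b ∈ tr) :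
    ∑ i ∈ Finset.range (n - 1),
        ((2 * (i + 1) * ((n - i - 1 + k - 1) / k)
            + 2 * (n - i - 1) * ((i + 1 + k - 1) / k) : ℕ) : ℝ)
          * (t (i + 1) - t i)
      ≤ ∑ a : Fin n,
          ((trips a).map (fun tr =>
            lineWalkCost t (((a : ℕ) :: tr.map (Fin.val)) ++ [(a : ℕ)]))).sum := by
  have hwalk : ∀ (a : Fin n) tr, ((a : ℕ) :: tr.map Fin.val) ++ [(a : ℕ)]
      = (a :: tr ++ [a]).map Fin.val := by simp
  simp_rw [hwalk, lineWalkCost_map_val hmono, list_sum_map_finset_sum, List.sum_map_mul_right]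
  rw [Finset.sum_comm]
  refine Finset.sum_le_sum fun j hj => ?_
  rw [← Finset.sum_mul]
  refine mul_le_mul_of_nonneg_right ?_ (sub_nonneg.mpr (hmono j.le_succ))
  have hjn : j < n := by rw [Finset.mem_range] at hj; omega
  have hgap := gap_coefficient_le_sum_crossings hjn trips hlen hcover
  simpa [Nat.cast_list_sum, Function.comp_def] using (Nat.cast_le (α := ℝ)).mpr hgap

/-- LDTTP-k independent lower bound on the line: `n` teams sit at
monotone positions `t 0 ≤ t 1 ≤ …` on a line; each team `a` has a list of road
trips, each visiting at most `k` opponents before returning home, and every opponent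
is visited in some trip.  Then the total travel distance is at least
`Σ_{i=0}^{n−2} c_i · d_i`, where the gap between teams `i` and `i+1` has length
`d_i = t (i+1) − t i`, and `c_i = 2(i+1)⌈(n−i−1)/k⌉ + 2(n−i−1)⌈(i+1)/k⌉`
(with `⌈a/k⌉ = (a+k−1)/k` in natural division): each of the `i+1` teams to the left
needs at least `⌈(n−i−1)/k⌉` round trips crossing the gap, each of the `n−i−1` teams
to the right needs at least `⌈(i+1)/k⌉`, and each round trip crosses the gap twice. -/
theorem stmt_16 (n k : ℕ) (hk : 1 ≤ k) (hn : 2 ≤ n)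
    (t : ℕ → ℝ) (hmono : Monotone t)
    (trips : Fin n → List (List (Fin n)))
    (hlen : ∀ a, ∀ tr ∈ trips a, tr.length ≤ k)
    (hne : ∀ a, ∀ tr ∈ trips a, ∀ b ∈ tr, b ≠ a)
    (hcover : ∀ a b : Fin n, a ≠ b → ∃ tr ∈ trips a, b ∈ tr) :
    ∑ i ∈ Finset.range (n - 1),
        ((2 * (i + 1) * ((n - i - 1 + k - 1) / k)
            + 2 * (n - i - 1) * ((i + 1 + k - 1) / k) : ℕ) : ℝ)
          * (t (i + 1) - t i)
      ≤ ∑ a : Fin n,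
          ((trips a).map (fun tr =>
            lineWalkCost t (((a : ℕ) :: tr.map (Fin.val)) ++ [(a : ℕ)]))).sum :=
  stmt_16_general n k t hmono trips hlen hcover
end

section
/- Fix integers k ≥ 3 and n with k | n, and for 1 ≤ i ≤ n/2 with i ≡ j (mod k), 1 ≤ j ≤ k−1, define f_i = (4/k)·i·(n−i) + ((2k−2)/k)·n and c_i = (4/k)·i·(n−i) + (2/k)·((k−j)·n + (2j−k)·i). Then f_i/c_i = 1 + ((j−1)·n − (2j−k)·i) / (2·i·(n−i) + (k−j)·n + (2j−k)·i), and for all such i (using i ≥ j), f_i/c_i ≤ 1 + (k−2)/(2k−1) + C/n = (3k−3)/(2k−1) + C/n for some constant C depending only on k. If instead i ≡ 0 (mod k), then f_i = c_i = (4/k)·i·(n−i), so f_i/c_i = 1. -/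
/-!
Write `D = 2i(n−i) + (k−j)n + (2j−k)i` and `N = (j−1)n − (2j−k)i`. Then `c_i = (2/k)·D` and
`f_i = (2/k)·(D + N)`, so `f_i/c_i = 1 + N/D`. Rewriting `D = (2i+k−j)(n−i) + j·i` shows `D ≥ i·n`,
and `(2k−1)N − (k−2)D ≤ 3k²·i` holds in both possible cases: `i = j` (the only index of residue
`j` below `k`) and `i ≥ k + j`. Dividing by `(2k−1)D ≥ (2k−1)·i·n` gives
`N/D ≤ (k−2)/(2k−1) + 3k²/((2k−1)n)`.
-/

lemma Nat.mod_eq_self_or_add_mod_le (i k : ℕ) : i % k = i ∨ k + i % k ≤ i := by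
  rcases Nat.eq_zero_or_pos (i / k) with hq | hq
  · left
    simpa [hq] using Nat.div_add_mod i k
  · right
    have := Nat.div_add_mod i k
    have : k * 1 ≤ k * (i / k) := Nat.mul_le_mul_left k hq
    omega

namespace CyclePacking

lemma div_le_div_add_div_of_mul_sub_mul_le {N D a b e i n : ℝ} (hb : 0 < b) (hi : 0 < i)
    (hn : 0 < n) (he : 0 ≤ e) (hD : i * n ≤ D) (hND : b * N - a * D ≤ e * i) :
    N / D ≤ a / b + e / (b * n) := by
  have hD0 : 0 < D := (mul_pos hi hn).trans_le hD
  calc N / D = a / b + (b * N - a * D) / (b * D) := by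
        field_simp
        ring
    _ ≤ a / b + e * i / (b * (i * n)) := by
        gcongr
    _ = a / b + e / (b * n) := by
        field_simp

def scaledLowerBound (k n i j : ℝ) : ℝ := 2 * i * (n - i) + (k - j) * n + (2 * j - k) * i

def scaledGap (k n i j : ℝ) : ℝ := (j - 1) * n - (2 * j - k) * i

variable {k n i j : ℝ}

lemma mul_le_scaledLowerBound (hi : 0 ≤ i) (hin : 2 * i ≤ n) (hj : 0 ≤ j) (hjk : j ≤ k) :
    i * n ≤ scaledLowerBound k n i j := by
  have hexpand : scaledLowerBound k n i j = (2 * i + k - j) * (n - i) + j * i := by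
    unfold scaledLowerBound
    ring
  rw [hexpand]
  nlinarith [mul_nonneg hi (sub_nonneg.2 hin),
    mul_nonneg (sub_nonneg.2 hjk) (by linarith : 0 ≤ n - i), mul_nonneg hj hi]

lemma gap_bound_of_eq (hn : 0 ≤ n) (hj : 0 ≤ j) (hjk : j + 1 ≤ k) :
    (2 * k - 1) * scaledGap k n j j - (k - 2) * scaledLowerBound k n j j ≤ 3 * k ^ 2 * j := by
  have hexpand :
      3 * k ^ 2 * j - ((2 * k - 1) * scaledGap k n j j - (k - 2) * scaledLowerBound k n j j) =
        n * (k + 1) * (k - 1 - j) + (4 * k - 2) * j ^ 2 + 3 * k * j := by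
    unfold scaledGap scaledLowerBound
    ring
  have hk : 0 ≤ k := by linarith
  nlinarith [mul_nonneg (mul_nonneg hn (by linarith : 0 ≤ k + 1)) (by linarith : 0 ≤ k - 1 - j),
    mul_nonneg (by linarith : 0 ≤ 4 * k - 2) (sq_nonneg j), mul_nonneg hk hj]

lemma gap_bound_of_add_le (hin : 2 * i ≤ n) (hj : 1 ≤ j) (hjk : j + 1 ≤ k) (hkj : k + j ≤ i) :
    (2 * k - 1) * scaledGap k n i j - (k - 2) * scaledLowerBound k n i j ≤ 3 * k ^ 2 * i := by
  have hexpand :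
      3 * k ^ 2 * i - ((2 * k - 1) * scaledGap k n i j - (k - 2) * scaledLowerBound k n i j) =
        (k - 2) * i * (n - 2 * i)
        + n * ((k - 2) * (i - k - j) + (2 * k - 1) * (k - 1 - j) + (k - 2))
        + 3 * i * (2 * j * (k - 1) + k) := by
    unfold scaledGap scaledLowerBound
    ring
  have hk2 : 0 ≤ k - 2 := by linarith
  have hi : 0 ≤ i := by linarith
  have hn : 0 ≤ n := by linarith
  nlinarith [mul_nonneg (mul_nonneg hk2 hi) (by linarith : 0 ≤ n - 2 * i),
    mul_nonneg hn (add_nonneg (add_nonneg (mul_nonneg hk2 (by linarith : 0 ≤ i - k - j))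
      (mul_nonneg (by linarith : 0 ≤ 2 * k - 1) (by linarith : 0 ≤ k - 1 - j))) hk2),
    mul_nonneg hi (by nlinarith : 0 ≤ 2 * j * (k - 1) + k)]

lemma ratio_eq_one_add (hk : k ≠ 0) (hD : scaledLowerBound k n i j ≠ 0) :
    ((4 / k) * i * (n - i) + ((2 * k - 2) / k) * n) /
        ((4 / k) * i * (n - i) + (2 / k) * ((k - j) * n + (2 * j - k) * i))
      = 1 + scaledGap k n i j / scaledLowerBound k n i j := by
  have hf : (4 / k) * i * (n - i) + ((2 * k - 2) / k) * n
      = 2 / k * (scaledLowerBound k n i j + scaledGap k n i j) := by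
    unfold scaledLowerBound scaledGap
    field_simp
    ring
  have hc : (4 / k) * i * (n - i) + (2 / k) * ((k - j) * n + (2 * j - k) * i)
      = 2 / k * scaledLowerBound k n i j := by
    unfold scaledLowerBound
    field_simp
    ring
  rw [hf, hc, mul_div_mul_left _ _ (div_ne_zero two_ne_zero hk), add_div, div_self hD]

lemma ratio_eq_and_le (hi : 0 < i) (hin : 2 * i ≤ n) (hj : 1 ≤ j) (hjk : j + 1 ≤ k)
    (hcase : j = i ∨ k + j ≤ i) :
    ((4 / k) * i * (n - i) + ((2 * k - 2) / k) * n) /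
          ((4 / k) * i * (n - i) + (2 / k) * ((k - j) * n + (2 * j - k) * i))
        = 1 + ((j - 1) * n - (2 * j - k) * i) /
            (2 * i * (n - i) + (k - j) * n + (2 * j - k) * i) ∧
      ((4 / k) * i * (n - i) + ((2 * k - 2) / k) * n) /
          ((4 / k) * i * (n - i) + (2 / k) * ((k - j) * n + (2 * j - k) * i))
        ≤ (3 * k - 3) / (2 * k - 1) + 3 * k ^ 2 / (2 * k - 1) / n := by
  have hn : 0 < n := by linarith
  have hk : 0 < k := by linarith
  have hD : i * n ≤ scaledLowerBound k n i j :=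
    mul_le_scaledLowerBound hi.le hin (by linarith) (by linarith)
  have hratio := ratio_eq_one_add hk.ne' ((mul_pos hi hn).trans_le hD).ne'
  have hgap : (2 * k - 1) * scaledGap k n i j - (k - 2) * scaledLowerBound k n i j
      ≤ 3 * k ^ 2 * i := by
    rcases hcase with rfl | hkj
    · exact gap_bound_of_eq hn.le (by linarith) hjk
    · exact gap_bound_of_add_le hin hj hjk hkj
  refine ⟨hratio, ?_⟩
  calc _ = 1 + scaledGap k n i j / scaledLowerBound k n i j := hratio
    _ ≤ 1 + ((k - 2) / (2 * k - 1) + 3 * k ^ 2 / ((2 * k - 1) * n)) := by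
        gcongr
        exact div_le_div_add_div_of_mul_sub_mul_le (by linarith) hi hn (by positivity) hD hgap
    _ = (3 * k - 3) / (2 * k - 1) + 3 * k ^ 2 / (2 * k - 1) / n := by
        have : 2 * k - 1 ≠ 0 := by linarith
        rw [div_div, ← add_assoc, one_add_div this]
        ring

end CyclePacking

theorem stmt_17_general (k : ℕ) :
    (∃ C : ℝ, ∀ n i j : ℕ, 8 * k ^ 2 ≤ n → k ∣ n → 1 ≤ i → 2 * i ≤ n →
      i % k = j → 1 ≤ j → j ≤ k - 1 →
      ((4 / (k : ℝ)) * i * ((n : ℝ) - i) + ((2 * (k : ℝ) - 2) / (k : ℝ)) * n) /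
          ((4 / (k : ℝ)) * i * ((n : ℝ) - i)
            + (2 / (k : ℝ)) * (((k : ℝ) - j) * n + (2 * (j : ℝ) - k) * i))
        = 1 + (((j : ℝ) - 1) * n - (2 * (j : ℝ) - k) * i) /
            (2 * (i : ℝ) * ((n : ℝ) - i) + ((k : ℝ) - j) * n + (2 * (j : ℝ) - k) * i) ∧
      ((4 / (k : ℝ)) * i * ((n : ℝ) - i) + ((2 * (k : ℝ) - 2) / (k : ℝ)) * n) /
          ((4 / (k : ℝ)) * i * ((n : ℝ) - i)
            + (2 / (k : ℝ)) * (((k : ℝ) - j) * n + (2 * (j : ℝ) - k) * i))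
        ≤ (3 * (k : ℝ) - 3) / (2 * (k : ℝ) - 1) + C / n) ∧
    (∀ n i : ℕ, 8 * k ^ 2 ≤ n → k ∣ n → 1 ≤ i → 2 * i ≤ n → i % k = 0 →
      ((4 / (k : ℝ)) * i * ((n : ℝ) - i)) / ((4 / (k : ℝ)) * i * ((n : ℝ) - i)) = 1) := by
  refine ⟨⟨3 * (k : ℝ) ^ 2 / (2 * k - 1), fun n i j _ _ hi hin hmod hj hjk => ?_⟩,
    fun n i _ _ hi hin hmod => div_self ?_⟩
  · have hcase : j = i ∨ k + j ≤ i := by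
      subst hmod
      exact Nat.mod_eq_self_or_add_mod_le i k
    have hjk' : j + 1 ≤ k := by omega
    exact CyclePacking.ratio_eq_and_le (by exact_mod_cast hi) (by exact_mod_cast hin)
      (by exact_mod_cast hj) (by exact_mod_cast hjk') (by exact_mod_cast hcase)
  · have hk : k ≠ 0 := by
      rintro rfl
      simp only [Nat.mod_zero] at hmod
      omega
    have hni : (i : ℝ) < n := by exact_mod_cast (by omega : i < n)
    exact mul_ne_zero (mul_ne_zero (div_ne_zero four_ne_zero (Nat.cast_ne_zero.2 hk))
      (Nat.cast_ne_zero.2 (by omega))) (sub_pos.2 hni).ne'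

/-- with `f_i = (4/k)i(n−i) + ((2k−2)/k)n` and
`c_i = (4/k)i(n−i) + (2/k)((k−j)n + (2j−k)i)` for `1 ≤ i ≤ n/2`, `i ≡ j (mod k)`,
`1 ≤ j ≤ k−1`, one has the exact ratio formula
`f_i/c_i = 1 + ((j−1)n − (2j−k)i)/(2i(n−i) + (k−j)n + (2j−k)i)`, and there is a
constant `C` (depending only on `k`) with `f_i/c_i ≤ (3k−3)/(2k−1) + C/n` for all
such `n, i, j` (with `n ≥ 8k²` and `k ∣ n`); moreover if `i ≡ 0 (mod k)` then
`f_i = c_i = (4/k)i(n−i)`, so `f_i/c_i = 1`. -/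
theorem stmt_17 (k : ℕ) (hk : 3 ≤ k) :
    (∃ C : ℝ, ∀ n i j : ℕ, 8 * k ^ 2 ≤ n → k ∣ n → 1 ≤ i → 2 * i ≤ n →
      i % k = j → 1 ≤ j → j ≤ k - 1 →
      ((4 / (k : ℝ)) * i * ((n : ℝ) - i) + ((2 * (k : ℝ) - 2) / (k : ℝ)) * n) /
          ((4 / (k : ℝ)) * i * ((n : ℝ) - i)
            + (2 / (k : ℝ)) * (((k : ℝ) - j) * n + (2 * (j : ℝ) - k) * i))
        = 1 + (((j : ℝ) - 1) * n - (2 * (j : ℝ) - k) * i) /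
            (2 * (i : ℝ) * ((n : ℝ) - i) + ((k : ℝ) - j) * n + (2 * (j : ℝ) - k) * i) ∧
      ((4 / (k : ℝ)) * i * ((n : ℝ) - i) + ((2 * (k : ℝ) - 2) / (k : ℝ)) * n) /
          ((4 / (k : ℝ)) * i * ((n : ℝ) - i)
            + (2 / (k : ℝ)) * (((k : ℝ) - j) * n + (2 * (j : ℝ) - k) * i))
        ≤ (3 * (k : ℝ) - 3) / (2 * (k : ℝ) - 1) + C / n) ∧
    (∀ n i : ℕ, 8 * k ^ 2 ≤ n → k ∣ n → 1 ≤ i → 2 * i ≤ n → i % k = 0 →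
      ((4 / (k : ℝ)) * i * ((n : ℝ) - i)) / ((4 / (k : ℝ)) * i * ((n : ℝ) - i)) = 1) :=
  stmt_17_general k
end

section
/- Let H be a complete graph on n_S ≥ 4 vertices (n_S even) with nonnegative edge weights, total edge weight w(E_H) = Δ_H/2, and let M be any perfect matching in H. Construct a Hamiltonian cycle by listing the n_S/2 matching edges in a uniformly random cyclic order and connecting consecutive matching edges by new edges. Each new edge lies in E_H ∖ M and is a uniformly random element of E_H ∖ M (marginally); hence the expected total weight of the n_S/2 newly added edges is at most Δ_H/(2(n_S − 2)), and the resulting Hamiltonian cycle has expected weight at most w(M) + Δ_H/(2 n_S) + 2·Δ_H/n_S². -/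
private lemma flip_aux {n : ℕ} (j : Fin n) (H : Bool → (Fin n → Bool) → ℝ)
    (hH : ∀ s ε, H s (Function.update ε j (!(ε j))) = H s ε) :
    (2:ℝ) * ∑ ε : Fin n → Bool, H (ε j) ε = ∑ ε : Fin n → Bool, (H true ε + H false ε) := by
  have hinv : Function.Involutive (fun ε : Fin n → Bool => Function.update ε j (!(ε j))) := by
    intro ε
    funext x
    by_cases hx : x = j
    · subst hx; simp
    · simp [Function.update_of_ne hx]
  have hflip : ∑ ε : Fin n → Bool, H (!(ε j)) ε = ∑ ε : Fin n → Bool, H (ε j) ε := by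
    refine Fintype.sum_bijective _ hinv.bijective _ _ ?_
    intro ε
    simp [hH]
  calc (2:ℝ) * ∑ ε : Fin n → Bool, H (ε j) ε
      = (∑ ε : Fin n → Bool, H (ε j) ε) + ∑ ε : Fin n → Bool, H (!(ε j)) ε := by
        rw [hflip]; ring
    _ = ∑ ε : Fin n → Bool, (H (ε j) ε + H (!(ε j)) ε) := by rw [Finset.sum_add_distrib]
    _ = ∑ ε : Fin n → Bool, (H true ε + H false ε) := by
        refine Finset.sum_congr rfl fun ε _ => ?_
        cases h : ε j <;> simp [add_comm]

private lemma bool_pair_sum {n : ℕ} (F : Bool → Bool → ℝ) {j k : Fin n} (hjk : j ≠ k) :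
    (4:ℝ) * ∑ ε : Fin n → Bool, F (ε j) (ε k)
      = (2:ℝ)^n * ∑ s : Bool, ∑ t : Bool, F s t := by
  have h1 : (2:ℝ) * ∑ ε : Fin n → Bool, F (ε j) (ε k)
      = ∑ ε : Fin n → Bool, (F true (ε k) + F false (ε k)) :=
    flip_aux j (fun s ε => F s (ε k)) (fun s ε => by
      show F s (Function.update ε j (!(ε j)) k) = F s (ε k)
      rw [Function.update_of_ne (Ne.symm hjk)])
  have h2 : ∀ s : Bool, (2:ℝ) * ∑ ε : Fin n → Bool, F s (ε k)
      = ∑ ε : Fin n → Bool, (F s true + F s false) := fun s =>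
    flip_aux k (fun t _ => F s t) (fun t ε => rfl)
  calc (4:ℝ) * ∑ ε : Fin n → Bool, F (ε j) (ε k)
      = 2 * ((2:ℝ) * ∑ ε : Fin n → Bool, F (ε j) (ε k)) := by ring
    _ = 2 * ∑ ε : Fin n → Bool, (F true (ε k) + F false (ε k)) := by rw [h1]
    _ = (2 * ∑ ε : Fin n → Bool, F true (ε k)) + (2 * ∑ ε : Fin n → Bool, F false (ε k)) := by
        rw [Finset.sum_add_distrib]; ring
    _ = ∑ ε : Fin n → Bool, ((F true true + F true false) + (F false true + F false false)) := by
        rw [h2 true, h2 false, ← Finset.sum_add_distrib]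
    _ = (2:ℝ)^n * ∑ s : Bool, ∑ t : Bool, F s t := by
        rw [Finset.sum_const, Finset.card_univ]
        simp [Fintype.card_fun, Fintype.sum_bool]
        ring

private lemma perm_pair_sum {m : ℕ} (G : Fin m → Fin m → ℝ) {i i' : Fin m} (h : i ≠ i') :
    ((m * (m-1) : ℕ) : ℝ) * ∑ σ : Equiv.Perm (Fin m), G (σ i) (σ i')
      = (m.factorial : ℝ) * ∑ p ∈ (Finset.univ : Finset (Fin m)).offDiag, G p.1 p.2 := by
  have inv : ∀ j j' : Fin m, j ≠ j' →
      (∑ σ : Equiv.Perm (Fin m), G (σ j) (σ j'))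
        = ∑ σ : Equiv.Perm (Fin m), G (σ i) (σ i') := by
    intro j j' hjj'
    have hc : Equiv.swap i j i' ≠ j := by
      intro hc
      exact h ((Equiv.swap i j).injective (hc.trans (Equiv.swap_apply_left i j).symm)).symm
    set π : Equiv.Perm (Fin m) := (Equiv.swap (Equiv.swap i j i') j') * (Equiv.swap i j) with hπ
    have hπi : π i = j := by
      simp only [hπ, Equiv.Perm.mul_apply, Equiv.swap_apply_left]
      exact Equiv.swap_apply_of_ne_of_ne (Ne.symm hc) hjj'
    have hπi' : π i' = j' := by
      simp only [hπ, Equiv.Perm.mul_apply]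
      exact Equiv.swap_apply_left _ _
    refine Fintype.sum_bijective (fun σ => σ * π) (Equiv.mulRight π).bijective _ _ ?_
    intro σ
    simp [Equiv.Perm.mul_apply, hπi, hπi']
  have hswap : ∀ σ : Equiv.Perm (Fin m),
      (∑ p ∈ (Finset.univ : Finset (Fin m)).offDiag, G (σ p.1) (σ p.2))
        = ∑ p ∈ (Finset.univ : Finset (Fin m)).offDiag, G p.1 p.2 := by
    intro σ
    refine Finset.sum_equiv (Equiv.prodCongr σ σ) ?_ ?_
    · intro p
      simp [Finset.mem_offDiag]
    · intro p _
      simp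
  have hcardoff : ((Finset.univ : Finset (Fin m)).offDiag).card = m * (m-1) := by
    rw [Finset.offDiag_card, Finset.card_univ, Fintype.card_fin]
    cases m with
    | zero => rfl
    | succ k =>
        have hmul : (k+1)*(k+1) = (k+1)*k + (k+1) := by ring
        simp only [Nat.add_sub_cancel]
        omega
  calc ((m * (m-1) : ℕ) : ℝ) * ∑ σ : Equiv.Perm (Fin m), G (σ i) (σ i')
      = ∑ p ∈ (Finset.univ : Finset (Fin m)).offDiag,
          ∑ σ : Equiv.Perm (Fin m), G (σ p.1) (σ p.2) := by
        rw [Finset.sum_congr rfl (fun p hp => inv p.1 p.2 (Finset.mem_offDiag.mp hp).2.2),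
          Finset.sum_const, hcardoff, nsmul_eq_mul]
    _ = ∑ σ : Equiv.Perm (Fin m), ∑ p ∈ (Finset.univ : Finset (Fin m)).offDiag,
          G (σ p.1) (σ p.2) := Finset.sum_comm
    _ = ∑ σ : Equiv.Perm (Fin m), ∑ p ∈ (Finset.univ : Finset (Fin m)).offDiag, G p.1 p.2 :=
        Finset.sum_congr rfl fun σ _ => hswap σ
    _ = (m.factorial : ℝ) * ∑ p ∈ (Finset.univ : Finset (Fin m)).offDiag, G p.1 p.2 := by
        rw [Finset.sum_const, Finset.card_univ, Fintype.card_perm, Fintype.card_fin, nsmul_eq_mul]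

private lemma main_aux {V : Type*} [Fintype V] [DecidableEq V] (w : V → V → ℝ)
    (hnonneg : ∀ x y, 0 ≤ w x y)
    (m : ℕ) (hm : 2 ≤ m)
    (a b : Fin m → V)
    (hmatch : Function.Bijective (fun p : Fin m × Bool => if p.2 then b p.1 else a p.1))
    (nxt : Fin m → Fin m) (hne : ∀ i, i ≠ nxt i) :
    (1 / ((m.factorial * 2 ^ m : ℕ) : ℝ)) *
        (∑ σ : Equiv.Perm (Fin m), ∑ ε : Fin m → Bool, ∑ i : Fin m,
          w (if ε (σ i) then a (σ i) else b (σ i))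
            (if ε (σ (nxt i)) then b (σ (nxt i)) else a (σ (nxt i))))
      ≤ (∑ u, ∑ v, w u v) / (2 * ((2 * m : ℝ) - 2)) ∧
    (1 / ((m.factorial * 2 ^ m : ℕ) : ℝ)) *
        (∑ σ : Equiv.Perm (Fin m), ∑ ε : Fin m → Bool,
          ((∑ i : Fin m, w (a i) (b i)) + ∑ i : Fin m,
            w (if ε (σ i) then a (σ i) else b (σ i))
              (if ε (σ (nxt i)) then b (σ (nxt i)) else a (σ (nxt i)))))
      ≤ (∑ i : Fin m, w (a i) (b i)) + (∑ u, ∑ v, w u v) / (2 * (2 * m : ℝ))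
          + 2 * (∑ u, ∑ v, w u v) / ((2 * m : ℝ)) ^ 2 := by
  have hmR : (2:ℝ) ≤ (m:ℝ) := by exact_mod_cast hm
  have hm0 : (0:ℝ) < (m:ℝ) := by linarith
  have hm1 : (0:ℝ) < (m:ℝ) - 1 := by linarith
  have hm2' : (0:ℝ) ≤ (m:ℝ) - 2 := by linarith
  set Δ := ∑ u, ∑ v, w u v with hΔdef
  set W := ∑ i : Fin m, w (a i) (b i) with hWdef
  have hΔ0 : 0 ≤ Δ := Finset.sum_nonneg fun u _ => Finset.sum_nonneg fun v _ => hnonneg u v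
  set G : Fin m → Fin m → ℝ := fun jj kk =>
    ∑ s : Bool, ∑ t : Bool, w (if s then a jj else b jj) (if t then b kk else a kk) with hGdef
  set D := ∑ p ∈ (Finset.univ : Finset (Fin m)).offDiag, G p.1 p.2 with hDdef
  have hGnn : ∀ jj kk, 0 ≤ G jj kk := fun jj kk =>
    Finset.sum_nonneg fun s _ => Finset.sum_nonneg fun t _ => hnonneg _ _
  have hD0 : 0 ≤ D := Finset.sum_nonneg fun p _ => hGnn _ _
  -- D ≤ Δ
  have hbij : ∀ f : V → ℝ, (∑ p : Fin m × Bool, f (if p.2 then b p.1 else a p.1)) = ∑ v, f v :=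
    fun f => Fintype.sum_bijective _ hmatch _ f (fun p => rfl)
  have hrow : ∀ u : V, (∑ kk : Fin m, ∑ t : Bool, w u (if t then b kk else a kk)) = ∑ v, w u v := by
    intro u
    rw [← hbij (fun v => w u v), Fintype.sum_prod_type]
  have hcol : (∑ jj : Fin m, ∑ s : Bool, ∑ v, w (if s then a jj else b jj) v) = Δ := by
    rw [hΔdef, ← hbij (fun u => ∑ v, w u v)]
    rw [Fintype.sum_prod_type]
    refine Finset.sum_congr rfl fun jj _ => ?_
    simp [Fintype.sum_bool, add_comm]
  have hGsum : (∑ jj : Fin m, ∑ kk : Fin m, G jj kk) = Δ := by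
    calc ∑ jj : Fin m, ∑ kk : Fin m, G jj kk
        = ∑ jj : Fin m, ∑ s : Bool, ∑ kk : Fin m, ∑ t : Bool,
            w (if s then a jj else b jj) (if t then b kk else a kk) :=
          Finset.sum_congr rfl fun jj _ => Finset.sum_comm
      _ = ∑ jj : Fin m, ∑ s : Bool, ∑ v, w (if s then a jj else b jj) v :=
          Finset.sum_congr rfl fun jj _ => Finset.sum_congr rfl fun s _ => hrow _
      _ = Δ := hcol
  have hDΔ : D ≤ Δ := by
    have h1 : D ≤ ∑ p ∈ (Finset.univ ×ˢ Finset.univ : Finset (Fin m × Fin m)), G p.1 p.2 := by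
      refine Finset.sum_le_sum_of_subset_of_nonneg ?_ fun p _ _ => hGnn _ _
      intro p hp
      simp [Finset.mem_product]
    calc D ≤ ∑ p ∈ (Finset.univ ×ˢ Finset.univ : Finset (Fin m × Fin m)), G p.1 p.2 := h1
      _ = ∑ jj : Fin m, ∑ kk : Fin m, G jj kk := by rw [Finset.sum_product]
      _ = Δ := hGsum
  -- key identity for each i
  have key : ∀ i : Fin m, ((m * (m-1) : ℕ) : ℝ) *
      ((4:ℝ) * ∑ σ : Equiv.Perm (Fin m), ∑ ε : Fin m → Bool,
        w (if ε (σ i) then a (σ i) else b (σ i))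
          (if ε (σ (nxt i)) then b (σ (nxt i)) else a (σ (nxt i))))
      = (2:ℝ)^m * ((m.factorial : ℝ) * D) := by
    intro i
    have h4 : (4:ℝ) * ∑ σ : Equiv.Perm (Fin m), ∑ ε : Fin m → Bool,
        w (if ε (σ i) then a (σ i) else b (σ i))
          (if ε (σ (nxt i)) then b (σ (nxt i)) else a (σ (nxt i)))
        = (2:ℝ)^m * ∑ σ : Equiv.Perm (Fin m), G (σ i) (σ (nxt i)) := by
      rw [Finset.mul_sum, Finset.mul_sum]
      refine Finset.sum_congr rfl fun σ _ => ?_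
      exact bool_pair_sum
        (fun s t => w (if s then a (σ i) else b (σ i)) (if t then b (σ (nxt i)) else a (σ (nxt i))))
        (σ.injective.ne (hne i))
    rw [h4, mul_left_comm, perm_pair_sum G (hne i), ← hDdef]
  set S := ∑ σ : Equiv.Perm (Fin m), ∑ ε : Fin m → Bool, ∑ i : Fin m,
          w (if ε (σ i) then a (σ i) else b (σ i))
            (if ε (σ (nxt i)) then b (σ (nxt i)) else a (σ (nxt i))) with hSdef
  have hSswap : S = ∑ i : Fin m, ∑ σ : Equiv.Perm (Fin m), ∑ ε : Fin m → Bool,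
      w (if ε (σ i) then a (σ i) else b (σ i))
        (if ε (σ (nxt i)) then b (σ (nxt i)) else a (σ (nxt i))) := by
    rw [hSdef]
    calc ∑ σ : Equiv.Perm (Fin m), ∑ ε : Fin m → Bool, ∑ i : Fin m,
          w (if ε (σ i) then a (σ i) else b (σ i))
            (if ε (σ (nxt i)) then b (σ (nxt i)) else a (σ (nxt i)))
        = ∑ σ : Equiv.Perm (Fin m), ∑ i : Fin m, ∑ ε : Fin m → Bool,
          w (if ε (σ i) then a (σ i) else b (σ i))
            (if ε (σ (nxt i)) then b (σ (nxt i)) else a (σ (nxt i))) :=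
          Finset.sum_congr rfl fun σ _ => Finset.sum_comm
      _ = _ := Finset.sum_comm
  have hkeyS : ((m * (m-1) : ℕ) : ℝ) * ((4:ℝ) * S)
      = (m:ℝ) * ((2:ℝ)^m * ((m.factorial : ℝ) * D)) := by
    rw [hSswap, Finset.mul_sum, Finset.mul_sum]
    rw [Finset.sum_congr rfl fun i _ => key i]
    rw [Finset.sum_const, Finset.card_univ, Fintype.card_fin, nsmul_eq_mul]
  have h1m : 1 ≤ m := by omega
  have hnatcast : ((m * (m-1) : ℕ) : ℝ) = (m:ℝ) * ((m:ℝ) - 1) := by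
    rw [Nat.cast_mul, Nat.cast_sub h1m, Nat.cast_one]
  have h4S : ((m:ℝ) - 1) * ((4:ℝ) * S) = (2:ℝ)^m * ((m.factorial : ℝ) * D) := by
    have h := hkeyS
    rw [hnatcast] at h
    apply mul_left_cancel₀ (ne_of_gt hm0)
    linear_combination h
  have hSval : S = (m.factorial : ℝ) * 2^m * D / (4 * ((m:ℝ) - 1)) := by
    rw [eq_div_iff (by positivity)]
    linear_combination h4S
  have hN : ((m.factorial * 2 ^ m : ℕ) : ℝ) = (m.factorial : ℝ) * 2^m := by
    push_cast; ring
  have hNpos : (0:ℝ) < (m.factorial : ℝ) * 2^m := by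
    have := m.factorial_pos
    positivity
  have hL1 : (1 / ((m.factorial * 2 ^ m : ℕ) : ℝ)) * S = D / (4 * ((m:ℝ) - 1)) := by
    rw [hN, hSval]
    field_simp
  constructor
  · rw [hL1]
    rw [div_le_div_iff₀ (by linarith) (by nlinarith)]
    nlinarith [mul_nonneg (sub_nonneg.mpr hDΔ) (by linarith : (0:ℝ) ≤ 4*((m:ℝ)-1))]
  · have gensplit : ∀ (c : ℝ) (f : Equiv.Perm (Fin m) → (Fin m → Bool) → ℝ),
        (∑ σ : Equiv.Perm (Fin m), ∑ ε : Fin m → Bool, (c + f σ ε))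
          = ((m.factorial * 2 ^ m : ℕ) : ℝ) * c + ∑ σ : Equiv.Perm (Fin m), ∑ ε : Fin m → Bool, f σ ε := by
      intro c f
      simp only [Finset.sum_add_distrib, Finset.sum_const, Finset.card_univ, Fintype.card_fun,
        Fintype.card_bool, Fintype.card_fin, Fintype.card_perm, nsmul_eq_mul]
      push_cast
      ring
    rw [gensplit, ← hSdef, mul_add, hL1]
    have hid : (1 / ((m.factorial * 2 ^ m : ℕ) : ℝ)) * (((m.factorial * 2 ^ m : ℕ) : ℝ) * W) = W := by
      rw [hN]
      field_simp
    rw [hid]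
    have hfin : D / (4 * ((m:ℝ) - 1)) ≤ Δ / (2 * (2 * (m:ℝ))) + 2 * Δ / ((2 * (m:ℝ))) ^ 2 := by
      rw [div_add_div _ _ (by positivity : (2 * (2 * (m:ℝ))) ≠ 0)
          (by positivity : ((2 * (m:ℝ)) ^ 2) ≠ 0),
        div_le_div_iff₀ (by linarith : (0:ℝ) < 4 * ((m:ℝ) - 1)) (by positivity)]
      nlinarith [mul_nonneg (sub_nonneg.mpr hDΔ) (by positivity : (0:ℝ) ≤ (m:ℝ)^3),
        mul_nonneg (mul_nonneg hΔ0 hm0.le) hm2']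
    linarith


/-- let `H` be a complete graph on `n_S = 2m ≥ 4` vertices with
nonnegative symmetric weights, `Δ_H = Σ_u Σ_v w u v` the sum of weighted degrees, and
let the perfect matching `M` consist of the edges `(a i, b i)`, `i : Fin m`.
Connect the matching edges into a Hamiltonian cycle according to a uniformly random
cyclic order (a uniformly random permutation `σ` of the matching edges together with
a uniformly random orientation `ε` of each edge).  Then the expected total weight of
the `m` newly added connecting edges is at most `Δ_H/(2(n_S − 2))`, and the expected
weight of the resulting Hamiltonian cycle is at most
`w(M) + Δ_H/(2 n_S) + 2 Δ_H/n_S²`. -/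
theorem stmt_18 {V : Type*} [Fintype V] [DecidableEq V] (w : V → V → ℝ)
    (hsymm : ∀ x y, w x y = w y x)
    (hnonneg : ∀ x y, 0 ≤ w x y)
    (hself : ∀ x, w x x = 0)
    (m : ℕ) (hm : 2 ≤ m) (hcard : Fintype.card V = 2 * m)
    (a b : Fin m → V)
    (hmatch : Function.Bijective (fun p : Fin m × Bool => if p.2 then b p.1 else a p.1)) :
    (1 / ((m.factorial * 2 ^ m : ℕ) : ℝ)) *
        (∑ σ : Equiv.Perm (Fin m), ∑ ε : Fin m → Bool, ∑ i : Fin m,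
          w (if ε (σ i) then a (σ i) else b (σ i))
            (if ε (σ (⟨(i.val + 1) % m, Nat.mod_lt _ (by omega)⟩ : Fin m)) then b (σ (⟨(i.val + 1) % m, Nat.mod_lt _ (by omega)⟩ : Fin m)) else a (σ (⟨(i.val + 1) % m, Nat.mod_lt _ (by omega)⟩ : Fin m))))
      ≤ (∑ u, ∑ v, w u v) / (2 * ((2 * m : ℝ) - 2)) ∧
    (1 / ((m.factorial * 2 ^ m : ℕ) : ℝ)) *
        (∑ σ : Equiv.Perm (Fin m), ∑ ε : Fin m → Bool,
          ((∑ i : Fin m, w (a i) (b i)) + ∑ i : Fin m,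
            w (if ε (σ i) then a (σ i) else b (σ i))
              (if ε (σ (⟨(i.val + 1) % m, Nat.mod_lt _ (by omega)⟩ : Fin m)) then b (σ (⟨(i.val + 1) % m, Nat.mod_lt _ (by omega)⟩ : Fin m)) else a (σ (⟨(i.val + 1) % m, Nat.mod_lt _ (by omega)⟩ : Fin m)))))
      ≤ (∑ i : Fin m, w (a i) (b i)) + (∑ u, ∑ v, w u v) / (2 * (2 * m : ℝ))
          + 2 * (∑ u, ∑ v, w u v) / ((2 * m : ℝ)) ^ 2 := by
  refine main_aux w hnonneg m hm a b hmatch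
    (fun i => (⟨(i.val + 1) % m, Nat.mod_lt _ (by omega)⟩ : Fin m)) ?_
  intro i
  have hi := i.isLt
  simp only [Ne, Fin.ext_iff]
  intro hEq
  rcases Nat.lt_or_ge (i.val + 1) m with h | h
  · rw [Nat.mod_eq_of_lt h] at hEq; omega
  · have hh : i.val + 1 = m := by omega
    rw [hh, Nat.mod_self] at hEq; omega
end
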